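/- arXiv:2201.11027 — 6 statements merged into one kernel-verified Lean document; each statement's English description precedes it below -/
import Mathlib

section
/- If the set S := {r ≥ 0 : ρ(V⁺(r)) = 0} is nonempty and r₀ := inf S, then ρ(V⁺(r₀)) = 0. -/
open MeasureTheory Set

/-- The set `V⁺(r)`. -/
def Vplus {d D : ℕ} (V : Set (EuclideanSpace ℝ (Fin d)))
    (u f : EuclideanSpace ℝ (Fin D) → EuclideanSpace ℝ (Fin d) → ℝ)
    (x : EuclideanSpace ℝ (Fin d) → EuclideanSpace ℝ (Fin D))
    (p : EuclideanSpace ℝ (Fin d) → ℝ) (c₁ c₂ r : ℝ) :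
    Set (EuclideanSpace ℝ (Fin d)) :=
  {v | v ∈ V ∧ ∃ v' ∈ V,
    f (x v') v - c₂ * p v' < f (x v) v - c₂ * p v ∧
    (u (x v') v - c₁ * p v') - (u (x v) v - c₁ * p v) >
      r * ((f (x v) v - c₂ * p v) - (f (x v') v - c₂ * p v'))}

/-- The set `V⁻(r)`: as `V⁺(r)` but with the first inequality reversed. -/
def Vminus {d D : ℕ} (V : Set (EuclideanSpace ℝ (Fin d)))
    (u f : EuclideanSpace ℝ (Fin D) → EuclideanSpace ℝ (Fin d) → ℝ)
    (x : EuclideanSpace ℝ (Fin d) → EuclideanSpace ℝ (Fin D))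
    (p : EuclideanSpace ℝ (Fin d) → ℝ) (c₁ c₂ r : ℝ) :
    Set (EuclideanSpace ℝ (Fin d)) :=
  {v | v ∈ V ∧ ∃ v' ∈ V,
    f (x v') v - c₂ * p v' > f (x v) v - c₂ * p v ∧
    (u (x v') v - c₁ * p v') - (u (x v) v - c₁ * p v) >
      r * ((f (x v) v - c₂ * p v) - (f (x v') v - c₂ * p v'))}

/-- If `S = {r ≥ 0 : ρ(V⁺(r)) = 0}` is nonempty and `r₀ = inf S`, then `ρ(V⁺(r₀)) = 0`. -/
theorem measure_Vplus_sInf_eq_zero {d D : ℕ}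
    (V : Set (EuclideanSpace ℝ (Fin d))) (Q : Set (EuclideanSpace ℝ (Fin D)))
    (hVc : IsCompact V) (hQc : IsCompact Q)
    (ρ : Measure (EuclideanSpace ℝ (Fin d))) [IsProbabilityMeasure ρ] (hρV : ρ Vᶜ = 0)
    (u f : EuclideanSpace ℝ (Fin D) → EuclideanSpace ℝ (Fin d) → ℝ)
    (x : EuclideanSpace ℝ (Fin d) → EuclideanSpace ℝ (Fin D))
    (p : EuclideanSpace ℝ (Fin d) → ℝ)
    (hu : ContinuousOn (fun qv : EuclideanSpace ℝ (Fin D) × EuclideanSpace ℝ (Fin d) =>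
      u qv.1 qv.2) (Q ×ˢ V))
    (hf : ContinuousOn (fun qv : EuclideanSpace ℝ (Fin D) × EuclideanSpace ℝ (Fin d) =>
      f qv.1 qv.2) (Q ×ˢ V))
    (hx : ContinuousOn x V) (hxQ : MapsTo x V Q) (hp : ContinuousOn p V)
    (c₁ c₂ : ℝ) (hc₁ : c₁ = 0 ∨ c₁ = 1) (hc₂ : c₂ = 0 ∨ c₂ = 1)
    (S : Set ℝ) (hS : S = {r : ℝ | 0 ≤ r ∧ ρ (Vplus V u f x p c₁ c₂ r) = 0})
    (hSne : S.Nonempty) :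
    ρ (Vplus V u f x p c₁ c₂ (sInf S)) = 0 := by
  have hbdd : BddBelow S := by
    rw [hS]; exact ⟨0, fun r hr => hr.1⟩
  set r₀ := sInf S with hr₀
  -- monotonicity of Vplus
  have mono : ∀ s r : ℝ, s ≤ r →
      Vplus V u f x p c₁ c₂ r ⊆ Vplus V u f x p c₁ c₂ s := by
    rintro s r hsr v ⟨hvV, v', hv'V, hΔ, hL⟩
    refine ⟨hvV, v', hv'V, hΔ, lt_of_le_of_lt ?_ hL⟩
    exact mul_le_mul_of_nonneg_right hsr (by linarith)
  have key : ∀ n : ℕ, ρ (Vplus V u f x p c₁ c₂ (r₀ + 1/(n+1))) = 0 := by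
    intro n
    have h1 : r₀ < r₀ + 1/(n+1) := by
      have : (0:ℝ) < 1/(n+1) := by positivity
      linarith
    obtain ⟨s, hsS, hs⟩ := (csInf_lt_iff hbdd hSne).mp h1
    have hs0 : ρ (Vplus V u f x p c₁ c₂ s) = 0 := by
      rw [hS] at hsS; exact hsS.2
    exact measure_mono_null (mono s _ hs.le) hs0
  have hsub2 : Vplus V u f x p c₁ c₂ r₀ ⊆
      ⋃ n : ℕ, Vplus V u f x p c₁ c₂ (r₀ + 1/(n+1)) := by
    rintro v ⟨hvV, v', hv'V, hΔ, hL⟩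
    set Δ := (f (x v) v - c₂ * p v) - (f (x v') v - c₂ * p v') with hΔdef
    set L := (u (x v') v - c₁ * p v') - (u (x v) v - c₁ * p v) with hLdef
    have hΔpos : 0 < Δ := by simp only [hΔdef]; linarith
    have hr : r₀ < L / Δ := (lt_div_iff₀ hΔpos).mpr hL
    obtain ⟨n, hn⟩ := exists_nat_one_div_lt (show 0 < L / Δ - r₀ by linarith)
    refine mem_iUnion.mpr ⟨n, hvV, v', hv'V, hΔ, ?_⟩
    have : r₀ + 1/(n+1) < L / Δ := by linarith
    have := (lt_div_iff₀ hΔpos).mp this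
    linarith
  refine le_antisymm ?_ zero_le
  calc ρ (Vplus V u f x p c₁ c₂ r₀)
      ≤ ρ (⋃ n : ℕ, Vplus V u f x p c₁ c₂ (r₀ + 1/(n+1))) := measure_mono hsub2
    _ ≤ ∑' n : ℕ, ρ (Vplus V u f x p c₁ c₂ (r₀ + 1/(n+1))) := measure_iUnion_le _
    _ = 0 := by simp only [key, tsum_zero]
end

section
/- Let F ⊆ V be closed in V. Suppose that for every v ∈ F there exists v' ∈ V with γᵢ(v,v') > 0 for all 1 ≤ i ≤ n. Then there exists a Borel-measurable function h : F → V with finite range such that γᵢ(v, h(v)) > 0 for all v ∈ F and all 1 ≤ i ≤ n. -/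
open MeasureTheory Set

open scoped Classical in
/-- Piecewise function defined by a list of (set, value) pairs: first matching set wins. -/
noncomputable def pwAux {α β : Type*} (d : β) : List (Set α × β) → α → β
  | [] => fun _ => d
  | q :: L => fun w => if w ∈ q.1 then q.2 else pwAux d L w

theorem pwAux_cases {α β : Type*} (d : β) (L : List (Set α × β)) (w : α) :
    pwAux d L w = d ∨ ∃ p ∈ L, pwAux d L w = p.2 := by
  induction L with
  | nil => left; rfl
  | cons q L ih =>
    by_cases h : w ∈ q.1
    · exact Or.inr ⟨q, List.mem_cons_self, by simp [pwAux, h]⟩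
    · rcases ih with h' | ⟨p, hp, h'⟩
      · left; simpa [pwAux, h] using h'
      · exact Or.inr ⟨p, List.mem_cons_of_mem _ hp, by simpa [pwAux, h] using h'⟩

theorem pwAux_spec {α β : Type*} (d : β) (L : List (Set α × β)) (w : α)
    (P : β → Prop) (hex : ∃ p ∈ L, w ∈ p.1) (hall : ∀ p ∈ L, w ∈ p.1 → P p.2) :
    P (pwAux d L w) := by
  induction L with
  | nil => simp at hex
  | cons q L ih =>
    by_cases h : w ∈ q.1
    · simpa [pwAux, h] using hall q (List.mem_cons_self) h
    · rcases hex with ⟨p, hp, hw⟩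
      rcases List.mem_cons.mp hp with rfl | hp
      · exact absurd hw h
      · simpa [pwAux, h] using ih ⟨p, hp, hw⟩ (fun p hp hw => hall p (List.mem_cons_of_mem _ hp) hw)

theorem pwAux_measurable {α β : Type*} [MeasurableSpace α] [MeasurableSpace β]
    (d : β) (L : List (Set α × β)) (F : Set α)
    (hL : ∀ p ∈ L, MeasurableSet p.1) :
    Measurable (F.restrict (pwAux d L)) := by
  classical
  induction L with
  | nil => exact measurable_const
  | cons q L ih =>
    have hq : MeasurableSet {w : F | (w : α) ∈ q.1} :=
      (hL q (List.mem_cons_self)).preimage measurable_subtype_coe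
    have : F.restrict (pwAux d (q :: L)) =
        fun w : F => if (w : α) ∈ q.1 then q.2 else F.restrict (pwAux d L) w := rfl
    rw [this]
    exact Measurable.ite hq measurable_const
      (ih fun p hp => hL p (List.mem_cons_of_mem _ hp))
/-- The deviation gain `γᵢ(v, v')`, a linear combination (with coefficients `αᵢ`, `βᵢ`) of the
utility change and the constraint change when a player of type `v` reports `v'`. -/
def gam {d D : ℕ} (u f : EuclideanSpace ℝ (Fin D) → EuclideanSpace ℝ (Fin d) → ℝ)
    (x : EuclideanSpace ℝ (Fin d) → EuclideanSpace ℝ (Fin D))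
    (p : EuclideanSpace ℝ (Fin d) → ℝ) (c₁ c₂ : ℝ) {n : ℕ} (α β : Fin n → ℝ)
    (i : Fin n) (v v' : EuclideanSpace ℝ (Fin d)) : ℝ :=
  α i * ((u (x v') v - c₁ * p v') - (u (x v) v - c₁ * p v)) +
    β i * ((f (x v') v - c₂ * p v') - (f (x v) v - c₂ * p v))

/-- On a set `F` closed in `V` on which profitable deviations exist pointwise, one can
choose a Borel-measurable deviation rule `h : F → V` with finite range. -/
theorem exists_measurable_finite_range_deviation {d D : ℕ}
    (V : Set (EuclideanSpace ℝ (Fin d))) (Q : Set (EuclideanSpace ℝ (Fin D)))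
    (hVc : IsCompact V) (hQc : IsCompact Q)
    (u f : EuclideanSpace ℝ (Fin D) → EuclideanSpace ℝ (Fin d) → ℝ)
    (x : EuclideanSpace ℝ (Fin d) → EuclideanSpace ℝ (Fin D))
    (p : EuclideanSpace ℝ (Fin d) → ℝ)
    (hu : ContinuousOn (fun qv : EuclideanSpace ℝ (Fin D) × EuclideanSpace ℝ (Fin d) =>
      u qv.1 qv.2) (Q ×ˢ V))
    (hf : ContinuousOn (fun qv : EuclideanSpace ℝ (Fin D) × EuclideanSpace ℝ (Fin d) =>
      f qv.1 qv.2) (Q ×ˢ V))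
    (hx : ContinuousOn x V) (hxQ : MapsTo x V Q) (hp : ContinuousOn p V)
    (c₁ c₂ : ℝ) (hc₁ : c₁ = 0 ∨ c₁ = 1) (hc₂ : c₂ = 0 ∨ c₂ = 1)
    (n : ℕ) (hn : 1 ≤ n) (α β : Fin n → ℝ)
    (F : Set (EuclideanSpace ℝ (Fin d))) (hFV : F ⊆ V)
    (hFclosed : IsClosed (Subtype.val ⁻¹' F : Set V))
    (hdev : ∀ v ∈ F, ∃ v' ∈ V, ∀ i : Fin n, 0 < gam u f x p c₁ c₂ α β i v v') :
    ∃ h : EuclideanSpace ℝ (Fin d) → EuclideanSpace ℝ (Fin d),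
      MapsTo h F V ∧ (h '' F).Finite ∧ Measurable (F.restrict h) ∧
      ∀ v ∈ F, ∀ i : Fin n, 0 < gam u f x p c₁ c₂ α β i v (h v) := by
  rcases F.eq_empty_or_nonempty with hF | ⟨v₀, hv₀⟩
  · subst hF
    haveI : Subsingleton (↥(∅ : Set (EuclideanSpace ℝ (Fin d)))) :=
      ⟨fun a _ => absurd a.2 (notMem_empty _)⟩
    exact ⟨id, by simp [MapsTo], by simp, Subsingleton.measurable, by simp⟩
  haveI : CompactSpace ↥V := isCompact_iff_compactSpace.mp hVc
  -- continuity of `γᵢ(·, c)` on `V`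
  have hγ : ∀ c ∈ V, ∀ i : Fin n,
      ContinuousOn (fun w => gam u f x p c₁ c₂ α β i w c) V := by
    intro c hc i
    have hA : ContinuousOn (fun w => u (x c) w) V :=
      hu.comp ((continuous_const.prodMk continuous_id).continuousOn)
        (fun w hw => ⟨hxQ hc, hw⟩)
    have hB : ContinuousOn (fun w => u (x w) w) V :=
      hu.comp (hx.prodMk continuousOn_id) (fun w hw => ⟨hxQ hw, hw⟩)
    have hC : ContinuousOn (fun w => f (x c) w) V :=
      hf.comp ((continuous_const.prodMk continuous_id).continuousOn)
        (fun w hw => ⟨hxQ hc, hw⟩)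
    have hD : ContinuousOn (fun w => f (x w) w) V :=
      hf.comp (hx.prodMk continuousOn_id) (fun w hw => ⟨hxQ hw, hw⟩)
    unfold gam
    exact (continuousOn_const.mul ((hA.sub continuousOn_const).sub
        (hB.sub (continuousOn_const.mul hp)))).add
      (continuousOn_const.mul ((hC.sub continuousOn_const).sub
        (hD.sub (continuousOn_const.mul hp))))
  -- choose pointwise deviations
  choose dev hdevV hdevγ using fun v : F => hdev ↑v v.2
  -- open sets in the subtype `V`
  set S : F → Set ↥V := fun a =>
    ⋂ i, (V.restrict (fun w => gam u f x p c₁ c₂ α β i w (dev a))) ⁻¹' Ioi 0 with hS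
  have hSopen : ∀ a, IsOpen (S a) := fun a =>
    isOpen_iInter_of_finite fun i =>
      isOpen_Ioi.preimage ((hγ (dev a) (hdevV a) i).restrict)
  have hcov : (Subtype.val ⁻¹' F : Set V) ⊆ ⋃ a : F, S a := by
    intro w hw
    exact mem_iUnion.2 ⟨⟨↑w, hw⟩, mem_iInter.2 fun i => hdevγ ⟨↑w, hw⟩ i⟩
  obtain ⟨t, ht⟩ := hFclosed.isCompact.elim_finite_subcover S hSopen hcov
  -- realize the relatively open sets as preimages of open sets
  have hUo : ∀ a : F, ∃ U, IsOpen U ∧ Subtype.val ⁻¹' U = S a := fun a =>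
    isOpen_induced_iff.mp (hSopen a)
  choose Uo hUoOpen hUoPre using hUo
  set L : List (Set (EuclideanSpace ℝ (Fin d)) × EuclideanSpace ℝ (Fin d)) :=
    t.toList.map (fun a => (Uo a, dev a)) with hL
  have memL : ∀ q ∈ L, ∃ a ∈ t, q = (Uo a, dev a) := by
    intro q hq
    rcases List.mem_map.mp hq with ⟨a, ha, rfl⟩
    exact ⟨a, (Finset.mem_toList).mp ha, rfl⟩
  set h₀ : EuclideanSpace ℝ (Fin d) → EuclideanSpace ℝ (Fin d) :=
    pwAux (dev ⟨v₀, hv₀⟩) L with hh₀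
  refine ⟨h₀, ?_, ?_, ?_, ?_⟩
  · intro w hw
    rcases pwAux_cases (dev ⟨v₀, hv₀⟩) L w with hcase | ⟨q, hq, hcase⟩
    · rw [hh₀, hcase]; exact hdevV _
    · rw [hh₀, hcase]
      rcases memL q hq with ⟨a, _, rfl⟩
      exact hdevV a
  · apply Set.Finite.subset
      (((L.map Prod.snd).finite_toSet).insert (dev ⟨v₀, hv₀⟩))
    rintro _ ⟨w, _, rfl⟩
    rcases pwAux_cases (dev ⟨v₀, hv₀⟩) L w with hcase | ⟨q, hq, hcase⟩
    · rw [hh₀, hcase]; exact mem_insert _ _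
    · rw [hh₀, hcase]
      exact mem_insert_of_mem _ (List.mem_map.mpr ⟨q, hq, rfl⟩)
  · exact pwAux_measurable _ _ _ (fun q hq => by
      rcases memL q hq with ⟨a, _, rfl⟩
      exact (hUoOpen a).measurableSet)
  · intro w hw i
    have hw' : (⟨w, hFV hw⟩ : V) ∈ Subtype.val ⁻¹' F := hw
    rcases mem_iUnion₂.mp (ht hw') with ⟨a, hat, hwS⟩
    refine pwAux_spec _ _ _ (fun b => 0 < gam u f x p c₁ c₂ α β i w b) ?_ ?_
    · refine ⟨(Uo a, dev a), List.mem_map.mpr ⟨a, Finset.mem_toList.mpr hat, rfl⟩, ?_⟩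
      have : (⟨w, hFV hw⟩ : V) ∈ Subtype.val ⁻¹' (Uo a) := by rw [hUoPre]; exact hwS
      exact this
    · intro q hq hwq
      rcases memL q hq with ⟨a', _, rfl⟩
      have : (⟨w, hFV hw⟩ : V) ∈ S a' := by rw [← hUoPre]; exact hwq
      exact mem_iInter.mp this i
end

section
/- Let E ⊆ V be Borel measurable with ρ(E) > 0. Suppose that for every v ∈ E there exists v' ∈ V such that γᵢ(v,v') > 0 for all 1 ≤ i ≤ n. Then there exists a Borel-measurable function h : E → V such that for every 1 ≤ i ≤ n, the function gᵢ(v) := γᵢ(v, h(v)) is ρ-integrable on E and ∫_E gᵢ dρ > 0. -/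
open MeasureTheory Set

/-- Lemma 2 (exist-integral): if `ρ(E) > 0` and profitable deviations exist pointwise on
`E`, there is a measurable deviation rule whose gains integrate to a positive value. -/
theorem exists_deviation_positive_integral {d D : ℕ}
    (V : Set (EuclideanSpace ℝ (Fin d))) (Q : Set (EuclideanSpace ℝ (Fin D)))
    (hVc : IsCompact V) (hQc : IsCompact Q)
    (ρ : Measure (EuclideanSpace ℝ (Fin d))) [IsProbabilityMeasure ρ] (hρV : ρ Vᶜ = 0)
    (u f : EuclideanSpace ℝ (Fin D) → EuclideanSpace ℝ (Fin d) → ℝ)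
    (x : EuclideanSpace ℝ (Fin d) → EuclideanSpace ℝ (Fin D))
    (p : EuclideanSpace ℝ (Fin d) → ℝ)
    (hu : ContinuousOn (fun qv : EuclideanSpace ℝ (Fin D) × EuclideanSpace ℝ (Fin d) =>
      u qv.1 qv.2) (Q ×ˢ V))
    (hf : ContinuousOn (fun qv : EuclideanSpace ℝ (Fin D) × EuclideanSpace ℝ (Fin d) =>
      f qv.1 qv.2) (Q ×ˢ V))
    (hx : ContinuousOn x V) (hxQ : MapsTo x V Q) (hp : ContinuousOn p V)
    (c₁ c₂ : ℝ) (hc₁ : c₁ = 0 ∨ c₁ = 1) (hc₂ : c₂ = 0 ∨ c₂ = 1)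
    (n : ℕ) (hn : 1 ≤ n) (α β : Fin n → ℝ)
    (E : Set (EuclideanSpace ℝ (Fin d))) (hEV : E ⊆ V) (hEm : MeasurableSet E)
    (hEpos : 0 < ρ E)
    (hdev : ∀ v ∈ E, ∃ v' ∈ V, ∀ i : Fin n, 0 < gam u f x p c₁ c₂ α β i v v') :
    ∃ h : EuclideanSpace ℝ (Fin d) → EuclideanSpace ℝ (Fin d),
      MapsTo h E V ∧ Measurable (E.restrict h) ∧
      ∀ i : Fin n,
        IntegrableOn (fun v => gam u f x p c₁ c₂ α β i v (h v)) E ρ ∧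
        0 < ∫ v in E, gam u f x p c₁ c₂ α β i v (h v) ∂ρ := by
  classical
  have hnFin : Nonempty (Fin n) := ⟨⟨0, hn⟩⟩
  -- the joint gain function on `V ×ˢ V`
  set γ : Fin n → (EuclideanSpace ℝ (Fin d) × EuclideanSpace ℝ (Fin d)) → ℝ :=
    fun i z => gam u f x p c₁ c₂ α β i z.1 z.2 with hγdef
  have hγc : ∀ i, ContinuousOn (γ i) (V ×ˢ V) := by
    intro i
    have h1 : ContinuousOn (fun z : EuclideanSpace ℝ (Fin d) × EuclideanSpace ℝ (Fin d) =>
        u (x z.2) z.1) (V ×ˢ V) := by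
      refine hu.comp (ContinuousOn.prodMk (hx.comp continuousOn_snd fun z hz => hz.2)
        continuousOn_fst) fun z hz => ⟨hxQ hz.2, hz.1⟩
    have h2 : ContinuousOn (fun z : EuclideanSpace ℝ (Fin d) × EuclideanSpace ℝ (Fin d) =>
        u (x z.1) z.1) (V ×ˢ V) := by
      refine hu.comp (ContinuousOn.prodMk (hx.comp continuousOn_fst fun z hz => hz.1)
        continuousOn_fst) fun z hz => ⟨hxQ hz.1, hz.1⟩
    have h3 : ContinuousOn (fun z : EuclideanSpace ℝ (Fin d) × EuclideanSpace ℝ (Fin d) =>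
        f (x z.2) z.1) (V ×ˢ V) := by
      refine hf.comp (ContinuousOn.prodMk (hx.comp continuousOn_snd fun z hz => hz.2)
        continuousOn_fst) fun z hz => ⟨hxQ hz.2, hz.1⟩
    have h4 : ContinuousOn (fun z : EuclideanSpace ℝ (Fin d) × EuclideanSpace ℝ (Fin d) =>
        f (x z.1) z.1) (V ×ˢ V) := by
      refine hf.comp (ContinuousOn.prodMk (hx.comp continuousOn_fst fun z hz => hz.1)
        continuousOn_fst) fun z hz => ⟨hxQ hz.1, hz.1⟩
    have hp2 : ContinuousOn (fun z : EuclideanSpace ℝ (Fin d) × EuclideanSpace ℝ (Fin d) =>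
        p z.2) (V ×ˢ V) := hp.comp continuousOn_snd fun z hz => hz.2
    have hp1 : ContinuousOn (fun z : EuclideanSpace ℝ (Fin d) × EuclideanSpace ℝ (Fin d) =>
        p z.1) (V ×ˢ V) := hp.comp continuousOn_fst fun z hz => hz.1
    simp only [hγdef, gam]
    exact ((continuousOn_const.mul (((h1.sub (continuousOn_const.mul hp2)).sub
        (h2.sub (continuousOn_const.mul hp1))))).add
      (continuousOn_const.mul (((h3.sub (continuousOn_const.mul hp2)).sub
        (h4.sub (continuousOn_const.mul hp1))))))
  -- pointwise deviations
  choose dv hdvV hdvpos using hdev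
  have hEne : E.Nonempty := nonempty_of_measure_ne_zero hEpos.ne'
  obtain ⟨v₀, hv₀⟩ := hEne
  -- open neighborhoods on which a fixed deviation works
  have hO : ∀ t : E, ∃ O : Set (EuclideanSpace ℝ (Fin d)), IsOpen O ∧ (t : EuclideanSpace ℝ (Fin d)) ∈ O ∧
      ∀ w ∈ O ∩ V, ∀ i, 0 < γ i (w, dv t t.2) := by
    intro t
    have hct : dv t t.2 ∈ V := hdvV t t.2
    have hS : (⋂ i, {w | 0 < γ i (w, dv t t.2)}) ∈ nhdsWithin (t : EuclideanSpace ℝ (Fin d)) V := by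
      rw [Filter.iInter_mem]
      intro i
      have hcw : ContinuousWithinAt (fun w => γ i (w, dv t t.2)) V (t : EuclideanSpace ℝ (Fin d)) := by
        refine ((hγc i).comp (continuousOn_id.prodMk continuousOn_const)
          fun w hw => ⟨hw, hct⟩) _ (hEV t.2)
      exact hcw (Ioi_mem_nhds (hdvpos t t.2 i))
    rcases mem_nhdsWithin.1 hS with ⟨O, hOo, htO, hOsub⟩
    exact ⟨O, hOo, htO, fun w hw i => (mem_iInter.1 (hOsub ⟨hw.1, hw.2⟩)) i⟩
  choose O hOopen hOmem hOpos using hO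
  -- countable subcover
  obtain ⟨T, hTc, hTeq⟩ := TopologicalSpace.isOpen_iUnion_countable O hOopen
  have hcov : E ⊆ ⋃ t, O t := fun v hv => mem_iUnion.2 ⟨⟨v, hv⟩, hOmem _⟩
  have hTne : T.Nonempty := by
    have : v₀ ∈ ⋃ t ∈ T, O t := by rw [hTeq]; exact hcov hv₀
    obtain ⟨t, htT, -⟩ := mem_iUnion₂.1 this
    exact ⟨t, htT⟩
  obtain ⟨e, he⟩ := hTc.exists_eq_range hTne
  set B : ℕ → Set (EuclideanSpace ℝ (Fin d)) := fun m => O (e m) with hBdef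
  have hcovB : E ⊆ ⋃ m, B m := by
    intro v hv
    have : v ∈ ⋃ t ∈ T, O t := by rw [hTeq]; exact hcov hv
    rw [he, biUnion_range] at this
    exact this
  -- the measurable selection
  set P : ℕ → EuclideanSpace ℝ (Fin d) → Prop :=
    fun m w => w ∈ B m ∨ w ∉ ⋃ k, B k with hPdef
  have htot : ∀ w, ∃ m, P m w := by
    intro w
    by_cases hw : w ∈ ⋃ k, B k
    · obtain ⟨m, hm⟩ := mem_iUnion.1 hw
      exact ⟨m, Or.inl hm⟩
    · exact ⟨0, Or.inr hw⟩
  have hPm : ∀ m, MeasurableSet {w | P m w} := by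
    intro m
    exact (hOopen _).measurableSet.union
      (MeasurableSet.iUnion fun k => (hOopen _).measurableSet).compl
  set F : ℕ → EuclideanSpace ℝ (Fin d) → EuclideanSpace ℝ (Fin d) :=
    fun m w => if w ∈ B m then dv (e m) (e m).2 else v₀ with hFdef
  have hFm : ∀ m, Measurable (F m) := fun m =>
    Measurable.ite (hOopen _).measurableSet measurable_const measurable_const
  set h : EuclideanSpace ℝ (Fin d) → EuclideanSpace ℝ (Fin d) :=
    fun w => F (Nat.find (htot w)) w with hhdef
  have hmeas : Measurable h := Measurable.find hFm hPm htot
  -- key pointwise property on E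
  have key : ∀ v ∈ E, h v ∈ V ∧ ∀ i, 0 < γ i (v, h v) := by
    intro v hv
    have hvU : v ∈ ⋃ k, B k := hcovB hv
    have hfind := Nat.find_spec (htot v)
    rcases hfind with hB | hnot
    · have hh : h v = dv (e (Nat.find (htot v))) (e (Nat.find (htot v))).2 := by
        simp only [hhdef, hFdef, if_pos hB]
      constructor
      · rw [hh]; exact hdvV _ _
      · intro i
        have := hOpos (e (Nat.find (htot v))) v ⟨hB, hEV hv⟩ i
        rw [hh]; exact this
    · exact absurd hvU hnot
  refine ⟨h, fun v hv => (key v hv).1, hmeas.comp measurable_subtype_coe, fun i => ?_⟩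
  -- measurable modification of the gain
  have hVVm : MeasurableSet (V ×ˢ V) := hVc.measurableSet.prod hVc.measurableSet
  set G : EuclideanSpace ℝ (Fin d) × EuclideanSpace ℝ (Fin d) → ℝ :=
    fun z => if hz : z ∈ V ×ˢ V then γ i z else 0 with hGdef
  have hγrm : Measurable fun z : (V ×ˢ V : Set _) => γ i z :=
    (continuousOn_iff_continuous_restrict.1 (hγc i)).measurable
  have hGm : Measurable G := Measurable.dite hγrm measurable_const hVVm
  have hφ : Measurable fun v => (v, h v) := measurable_id.prodMk hmeas
  have haeq : (fun v => gam u f x p c₁ c₂ α β i v (h v)) =ᵐ[ρ.restrict E]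
      fun v => G (v, h v) := by
    filter_upwards [self_mem_ae_restrict hEm] with v hv
    have hmemVV : (v, h v) ∈ V ×ˢ V := ⟨hEV hv, (key v hv).1⟩
    simp only [hGdef, dif_pos hmemVV, hγdef]
  have hsm : AEStronglyMeasurable (fun v => gam u f x p c₁ c₂ α β i v (h v))
      (ρ.restrict E) := ((hGm.comp hφ).aestronglyMeasurable).congr haeq.symm
  -- boundedness
  obtain ⟨M, hM⟩ := (hVc.prod hVc).exists_bound_of_continuousOn (hγc i)
  have hbound : ∀ᵐ v ∂ρ.restrict E, ‖gam u f x p c₁ c₂ α β i v (h v)‖ ≤ M := by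
    filter_upwards [self_mem_ae_restrict hEm] with v hv
    exact hM (v, h v) ⟨hEV hv, (key v hv).1⟩
  have hInt : IntegrableOn (fun v => gam u f x p c₁ c₂ α β i v (h v)) E ρ :=
    Integrable.mono' (integrable_const M) hsm hbound
  refine ⟨hInt, ?_⟩
  have hnonneg : 0 ≤ᵐ[ρ.restrict E] fun v => gam u f x p c₁ c₂ α β i v (h v) := by
    filter_upwards [self_mem_ae_restrict hEm] with v hv
    exact le_of_lt ((key v hv).2 i)
  rw [setIntegral_pos_iff_support_of_nonneg_ae hnonneg hInt]
  refine lt_of_lt_of_le hEpos (measure_mono fun v hv => ?_)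
  exact ⟨ne_of_gt ((key v hv).2 i), hv⟩
end

section
/- The pair (x,p) is incentive compatible if and only if ∫_V [f(x(v),v) − c₂·p(v)] dρ(v) ≥ C and there exists a constant r ≥ 0 such that, with the surrogate outcome ũ(q) := u*(q) + r·f*(q) and surrogate utility Ũ(v) := ⟨ũ(x(v)), v⟩ − (c₁ + r·c₂)·p(v): (i) Ũ is differentiable on the interior V̊ of V with ∇Ũ(v) = ũ(x(v)) for every v ∈ V̊; (ii) Ũ(v') − Ũ(v) ≤ ⟨ũ(x(v')), v' − v⟩ for all v, v' ∈ V (i.e., Ũ is convex); and (iii) if r > 0 then the ex-ante constraint is binding under truthful reporting. -/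
open MeasureTheory Set

/-- Incentive compatibility of the interim rule pair `(x, p)` for a player with ex-ante
constraint level `C`: truthful reporting satisfies the ex-ante constraint, and any (measurable,
kernel-like) report strategy `s` whose ex-ante utility and constraint value exist either yields
no more utility than truth-telling or violates the ex-ante constraint. -/
def IncentiveCompatible {d D : ℕ} (V : Set (EuclideanSpace ℝ (Fin d)))
    (ρ : Measure (EuclideanSpace ℝ (Fin d)))
    (u f : EuclideanSpace ℝ (Fin D) → EuclideanSpace ℝ (Fin d) → ℝ)
    (x : EuclideanSpace ℝ (Fin d) → EuclideanSpace ℝ (Fin D))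
    (p : EuclideanSpace ℝ (Fin d) → ℝ) (c₁ c₂ C : ℝ) : Prop :=
  (∫ v in V, (f (x v) v - c₂ * p v) ∂ρ) ≥ C ∧
  ∀ s : EuclideanSpace ℝ (Fin d) → Measure (EuclideanSpace ℝ (Fin d)),
    Measurable s →
    (∀ v ∈ V, IsProbabilityMeasure (s v)) →
    (∀ v ∈ V, s v Vᶜ = 0) →
    (∀ v ∈ V, IntegrableOn (fun v' => u (x v') v - c₁ * p v') V (s v)) →
    (∀ v ∈ V, IntegrableOn (fun v' => f (x v') v - c₂ * p v') V (s v)) →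
    IntegrableOn (fun v => ∫ v' in V, (u (x v') v - c₁ * p v') ∂(s v)) V ρ →
    IntegrableOn (fun v => ∫ v' in V, (f (x v') v - c₂ * p v') ∂(s v)) V ρ →
    ((∫ v in V, (∫ v' in V, (u (x v') v - c₁ * p v') ∂(s v)) ∂ρ) ≤
        (∫ v in V, (u (x v) v - c₁ * p v) ∂ρ) ∨
      (∫ v in V, (∫ v' in V, (f (x v') v - c₂ * p v') ∂(s v)) ∂ρ) < C)

open scoped RealInnerProductSpace

/-- The surrogate outcome `ũ(q) = u*(q) + r·f*(q)`. -/
noncomputable def surrogateOutcome {d D : ℕ}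
    (ustar fstar : EuclideanSpace ℝ (Fin D) → EuclideanSpace ℝ (Fin d)) (r : ℝ)
    (q : EuclideanSpace ℝ (Fin D)) : EuclideanSpace ℝ (Fin d) :=
  ustar q + r • fstar q

/-- The surrogate utility `Ũ(v) = ⟨ũ(x(v)), v⟩ − (c₁ + r·c₂)·p(v)`. -/
noncomputable def surrogateUtility {d D : ℕ}
    (ustar fstar : EuclideanSpace ℝ (Fin D) → EuclideanSpace ℝ (Fin d))
    (x : EuclideanSpace ℝ (Fin d) → EuclideanSpace ℝ (Fin D))
    (p : EuclideanSpace ℝ (Fin d) → ℝ) (c₁ c₂ r : ℝ)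
    (v : EuclideanSpace ℝ (Fin d)) : ℝ :=
  ⟪surrogateOutcome ustar fstar r (x v), v⟫ - (c₁ + r * c₂) * p v

/-!
The ex-ante (utility, constraint) payoff pairs of all report strategies form a convex set
`K ⊆ ℝ²`, because strategies can be mixed, and incentive compatibility says that `K` misses the
quadrant `{utility > U₀, constraint ≥ C}` above truth-telling's pair `(U₀, F₀)`. A
two-dimensional separation argument then gives a multiplier `r ≥ 0` with complementary
slackness for which truth-telling maximises `utility + r · constraint` over `K`. When the
constraint binds, `r` is finite because some strategy strictly exceeds `C`: otherwise
truth-telling would maximise the constraint pointwise, forcing `f̂ = 0` on the interior of `V`.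

Testing the Lagrangian against the deviations "report `w` on `A`, tell the truth elsewhere"
gives the pointwise inequality for almost every type, hence, by continuity and the density of
full-measure sets, for every type. For linear `u` and `f` this pointwise inequality is exactly
the subgradient inequality (ii) for `Ũ`, from which (i) follows by continuity of `ũ ∘ x`.
Conversely, (ii) bounds the Lagrangian payoff of every strategy by that of truth-telling, and
(iii) turns this bound into incentive compatibility.
-/

open Filter Topology

section Multiplier

variable {K : Set (ℝ × ℝ)} {U₀ C : ℝ}

/- Mixing `z` and `z'` so that the constraint holds with equality: the utility gained per unit
of constraint violated never exceeds the utility lost per unit of slack gained. -/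
theorem Convex.mul_sub_le_of_forall_le_or_lt (hK : Convex ℝ K)
    (hIC : ∀ z ∈ K, z.1 ≤ U₀ ∨ z.2 < C) {z z' : ℝ × ℝ} (hz : z ∈ K) (hz' : z' ∈ K)
    (hlt : z.2 < C) (hle : C ≤ z'.2) :
    (z.1 - U₀) * (z'.2 - C) ≤ (U₀ - z'.1) * (C - z.2) := by
  set t := z'.2 - z.2
  have ht : 0 < t := by linarith
  obtain ⟨a, ha⟩ : ∃ a, a * t = z'.2 - C := ⟨_, div_mul_cancel₀ _ ht.ne'⟩
  obtain ⟨b, hb⟩ : ∃ b, b * t = C - z.2 := ⟨_, div_mul_cancel₀ _ ht.ne'⟩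
  have hab : a + b = 1 := mul_right_cancel₀ ht.ne' (by linarith)
  have hm₂ : a * z.2 + b * z'.2 = C :=
    mul_right_cancel₀ ht.ne' (by linear_combination z.2 * ha + z'.2 * hb)
  have hm := hK hz hz' (by nlinarith) (by nlinarith) hab
  rcases hIC _ hm with h | h <;> simp only [Prod.fst_add, Prod.snd_add, Prod.smul_fst,
    Prod.smul_snd, smul_eq_mul] at h
  · rw [← ha, ← hb]
    nlinarith [mul_le_mul_of_nonneg_right h ht.le, congrArg (· * (U₀ * t)) hab]
  · linarith

theorem exists_lagrange_multiplier {F₀ : ℝ} (hK : Convex ℝ K) (h₀ : (U₀, F₀) ∈ K)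
    (hC : C ≤ F₀) (hIC : ∀ z ∈ K, z.1 ≤ U₀ ∨ z.2 < C)
    (hslater : F₀ = C → ∃ z ∈ K, C < z.2) :
    ∃ r : ℝ, 0 ≤ r ∧ (0 < r → F₀ = C) ∧ ∀ z ∈ K, z.1 + r * z.2 ≤ U₀ + r * F₀ := by
  rcases hC.lt_or_eq with hgt | rfl
  · refine ⟨0, le_rfl, fun h => (lt_irrefl _ h).elim, fun z hz => ?_⟩
    rcases hIC z hz with h | h
    · linarith
    · nlinarith [hK.mul_sub_le_of_forall_le_or_lt hIC hz h₀ h hgt.le]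
  obtain ⟨z₂, hz₂, hCz₂⟩ := hslater rfl
  -- `r` is the largest utility gain per unit of constraint violation
  set S := insert 0 ((fun z : ℝ × ℝ => (z.1 - U₀) / (C - z.2)) '' {z ∈ K | z.2 < C})
  have hbound : ∀ z' ∈ K, C < z'.2 → ∀ t ∈ S, t ≤ (U₀ - z'.1) / (z'.2 - C) := by
    intro z' hz' hCz' t ht
    have hz'U : z'.1 ≤ U₀ := (hIC z' hz').resolve_right hCz'.le.not_gt
    rcases ht with rfl | ⟨z, ⟨hz, hlt⟩, rfl⟩
    · exact div_nonneg (by linarith) (by linarith)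
    · rw [div_le_div_iff₀ (by linarith) (by linarith)]
      exact hK.mul_sub_le_of_forall_le_or_lt hIC hz hz' hlt hCz'.le
  have hbdd : BddAbove S := ⟨_, hbound z₂ hz₂ hCz₂⟩
  refine ⟨sSup S, le_csSup hbdd (mem_insert _ _), fun _ => rfl, fun z hz => ?_⟩
  rcases lt_or_ge z.2 C with hlt | hge
  · have h := le_csSup hbdd (mem_insert_of_mem _ ⟨z, ⟨hz, hlt⟩, rfl⟩)
    rw [div_le_iff₀ (by linarith)] at h
    linarith
  · have hzU : z.1 ≤ U₀ := (hIC z hz).resolve_right hge.not_gt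
    rcases hge.lt_or_eq with hgt | heq
    · have h := csSup_le ⟨0, mem_insert _ _⟩ (hbound z hz hgt)
      rw [le_div_iff₀ (by linarith)] at h
      linarith
    · rw [← heq]
      linarith

end Multiplier

section Strategies

variable {α : Type*} [MeasurableSpace α] {μ : Measure α} {V : Set α}
  {G GU GF : α → α → ℝ} {s s₁ s₂ : α → Measure α}

/- Throughout, `G v w` is the payoff of a player of type `v` who reports `w`. -/

def IsReportStrategy (V : Set α) (s : α → Measure α) : Prop :=
  Measurable s ∧ (∀ v ∈ V, IsProbabilityMeasure (s v)) ∧ ∀ v ∈ V, s v Vᶜ = 0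

def ExAnteIntegrable (μ : Measure α) (V : Set α) (G : α → α → ℝ) (s : α → Measure α) :
    Prop :=
  (∀ v ∈ V, IntegrableOn (G v) V (s v)) ∧ IntegrableOn (fun v => ∫ w in V, G v w ∂(s v)) V μ

noncomputable def exAnte (μ : Measure α) (V : Set α) (G : α → α → ℝ) (s : α → Measure α) :
    ℝ :=
  ∫ v in V, ∫ w in V, G v w ∂(s v) ∂μ

def payoffSet (μ : Measure α) (V : Set α) (GU GF : α → α → ℝ) : Set (ℝ × ℝ) :=
  {z | ∃ s, IsReportStrategy V s ∧ ExAnteIntegrable μ V GU s ∧ ExAnteIntegrable μ V GF s ∧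
    (exAnte μ V GU s, exAnte μ V GF s) = z}

section Deterministic

variable {g : α → α}

theorem IsReportStrategy.dirac (hV : MeasurableSet V) (hg : Measurable g) (hgV : MapsTo g V V) :
    IsReportStrategy V fun v => Measure.dirac (g v) :=
  ⟨Measure.measurable_dirac.comp hg, fun _ _ => inferInstance, fun v hv => by
    simp [Measure.dirac_apply' _ hV.compl, hgV hv]⟩

variable [MeasurableSingletonClass α]

theorem setIntegral_dirac_of_mem {a : α} (ha : a ∈ V) (f : α → ℝ) :
    ∫ w in V, f w ∂Measure.dirac a = f a := by
  classical
  rw [setIntegral_dirac, if_pos ha]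

theorem exAnteIntegrable_dirac (hV : MeasurableSet V) (hgV : MapsTo g V V)
    (hG : IntegrableOn (fun v => G v (g v)) V μ) :
    ExAnteIntegrable μ V G fun v => Measure.dirac (g v) :=
  ⟨fun _ _ => (integrable_dirac enorm_lt_top).integrableOn,
    hG.congr_fun (fun _ hv => (setIntegral_dirac_of_mem (hgV hv) _).symm) hV⟩

theorem exAnte_dirac (hV : MeasurableSet V) (hgV : MapsTo g V V) :
    exAnte μ V G (fun v => Measure.dirac (g v)) = ∫ v in V, G v (g v) ∂μ :=
  setIntegral_congr_fun hV fun _ hv => setIntegral_dirac_of_mem (hgV hv) _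

theorem mem_payoffSet_of_deterministic (hV : MeasurableSet V) (hg : Measurable g)
    (hgV : MapsTo g V V) (hU : IntegrableOn (fun v => GU v (g v)) V μ)
    (hF : IntegrableOn (fun v => GF v (g v)) V μ) :
    (∫ v in V, GU v (g v) ∂μ, ∫ v in V, GF v (g v) ∂μ) ∈ payoffSet μ V GU GF :=
  ⟨_, .dirac hV hg hgV, exAnteIntegrable_dirac hV hgV hU, exAnteIntegrable_dirac hV hgV hF,
    by rw [exAnte_dirac hV hgV, exAnte_dirac hV hgV]⟩

theorem mem_payoffSet_truthful (hV : MeasurableSet V)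
    (hU : IntegrableOn (fun v => GU v v) V μ) (hF : IntegrableOn (fun v => GF v v) V μ) :
    (∫ v in V, GU v v ∂μ, ∫ v in V, GF v v ∂μ) ∈ payoffSet μ V GU GF :=
  mem_payoffSet_of_deterministic hV measurable_id (mapsTo_id V) hU hF

end Deterministic

section Mixture

variable {a b : ℝ}

theorem setIntegral_ofReal_smul_add_ofReal_smul {ν₁ ν₂ : Measure α} {f : α → ℝ}
    (h₁ : IntegrableOn f V ν₁) (h₂ : IntegrableOn f V ν₂) (ha : 0 ≤ a) (hb : 0 ≤ b) :
    ∫ w in V, f w ∂(ENNReal.ofReal a • ν₁ + ENNReal.ofReal b • ν₂) =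
      a * ∫ w in V, f w ∂ν₁ + b * ∫ w in V, f w ∂ν₂ := by
  rw [Measure.restrict_add, Measure.restrict_smul, Measure.restrict_smul,
    integral_add_measure (h₁.smul_measure ENNReal.ofReal_ne_top)
      (h₂.smul_measure ENNReal.ofReal_ne_top),
    integral_smul_measure, integral_smul_measure, ENNReal.toReal_ofReal ha,
    ENNReal.toReal_ofReal hb, smul_eq_mul, smul_eq_mul]

theorem IsReportStrategy.mix (h₁ : IsReportStrategy V s₁) (h₂ : IsReportStrategy V s₂)
    (ha : 0 ≤ a) (hb : 0 ≤ b) (hab : a + b = 1) :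
    IsReportStrategy V fun v => ENNReal.ofReal a • s₁ v + ENNReal.ofReal b • s₂ v := by
  refine ⟨Measure.measurable_of_measurable_coe _ fun t ht => ?_, fun v hv => ⟨?_⟩, fun v hv => ?_⟩
  · simp only [Measure.coe_add, Measure.coe_smul, Pi.add_apply, Pi.smul_apply, smul_eq_mul]
    exact (((Measure.measurable_coe ht).comp h₁.1).const_mul _).add
      (((Measure.measurable_coe ht).comp h₂.1).const_mul _)
  · have := h₁.2.1 v hv
    have := h₂.2.1 v hv
    simp [← ENNReal.ofReal_add ha hb, hab]
  · simp [h₁.2.2 v hv, h₂.2.2 v hv]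

theorem ExAnteIntegrable.mix (h₁ : ExAnteIntegrable μ V G s₁) (h₂ : ExAnteIntegrable μ V G s₂)
    (hV : MeasurableSet V) (ha : 0 ≤ a) (hb : 0 ≤ b) :
    ExAnteIntegrable μ V G fun v => ENNReal.ofReal a • s₁ v + ENNReal.ofReal b • s₂ v := by
  refine ⟨fun v hv => ?_, ?_⟩
  · rw [IntegrableOn, Measure.restrict_add, Measure.restrict_smul, Measure.restrict_smul]
    exact ((h₁.1 v hv).smul_measure ENNReal.ofReal_ne_top).add_measure
      ((h₂.1 v hv).smul_measure ENNReal.ofReal_ne_top)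
  · exact IntegrableOn.congr_fun ((h₁.2.const_mul a).add (h₂.2.const_mul b)) (fun v hv =>
      (setIntegral_ofReal_smul_add_ofReal_smul (h₁.1 v hv) (h₂.1 v hv) ha hb).symm) hV

theorem exAnte_mix (h₁ : ExAnteIntegrable μ V G s₁) (h₂ : ExAnteIntegrable μ V G s₂)
    (hV : MeasurableSet V) (ha : 0 ≤ a) (hb : 0 ≤ b) :
    exAnte μ V G (fun v => ENNReal.ofReal a • s₁ v + ENNReal.ofReal b • s₂ v) =
      a * exAnte μ V G s₁ + b * exAnte μ V G s₂ := by
  rw [exAnte, setIntegral_congr_fun hV fun v hv =>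
      setIntegral_ofReal_smul_add_ofReal_smul (h₁.1 v hv) (h₂.1 v hv) ha hb,
    integral_add (h₁.2.const_mul a) (h₂.2.const_mul b), integral_const_mul, integral_const_mul,
    exAnte, exAnte]

end Mixture

theorem convex_payoffSet (hV : MeasurableSet V) : Convex ℝ (payoffSet μ V GU GF) := by
  rintro _ ⟨s₁, hs₁, hU₁, hF₁, rfl⟩ _ ⟨s₂, hs₂, hU₂, hF₂, rfl⟩ a b ha hb hab
  refine ⟨_, hs₁.mix hs₂ ha hb hab, hU₁.mix hU₂ hV ha hb, hF₁.mix hF₂ hV ha hb, ?_⟩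
  rw [exAnte_mix hU₁ hU₂ hV ha hb, exAnte_mix hF₁ hF₂ hV ha hb]
  simp

theorem exAnte_add_mul_le (hs : IsReportStrategy V s) (hU : ExAnteIntegrable μ V GU s)
    (hF : ExAnteIntegrable μ V GF s) (hV : MeasurableSet V)
    (hUd : IntegrableOn (fun v => GU v v) V μ) (hFd : IntegrableOn (fun v => GF v v) V μ)
    {r : ℝ} (hle : ∀ v ∈ V, ∀ w ∈ V, GU v w + r * GF v w ≤ GU v v + r * GF v v) :
    exAnte μ V GU s + r * exAnte μ V GF s ≤
      (∫ v in V, GU v v ∂μ) + r * ∫ v in V, GF v v ∂μ := by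
  have hinner : ∀ v ∈ V,
      ∫ w in V, GU v w ∂s v + r * ∫ w in V, GF v w ∂s v ≤ GU v v + r * GF v v := by
    intro v hv
    have := hs.2.1 v hv
    have hsV : s v V = 1 := (prob_compl_eq_zero_iff hV).1 (hs.2.2 v hv)
    rw [← integral_const_mul, ← integral_add (hU.1 v hv) ((hF.1 v hv).const_mul r)]
    calc ∫ w in V, (GU v w + r * GF v w) ∂s v
        ≤ ∫ _ in V, (GU v v + r * GF v v) ∂s v :=
          setIntegral_mono_on ((hU.1 v hv).add ((hF.1 v hv).const_mul r))
            (integrableOn_const (by simp [hsV])) hV (hle v hv)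
      _ = GU v v + r * GF v v := by simp [Measure.real, hsV]
  have key : ∫ v in V, (∫ w in V, GU v w ∂s v + r * ∫ w in V, GF v w ∂s v) ∂μ ≤
      ∫ v in V, (GU v v + r * GF v v) ∂μ :=
    setIntegral_mono_on (hU.2.add (hF.2.const_mul r)) (hUd.add (hFd.const_mul r)) hV hinner
  rwa [integral_add hU.2 (hF.2.const_mul r), integral_add hUd (hFd.const_mul r),
    integral_const_mul, integral_const_mul] at key

theorem exAnte_le_or_lt_of_forall_lagrangian_le (hs : IsReportStrategy V s)
    (hU : ExAnteIntegrable μ V GU s) (hF : ExAnteIntegrable μ V GF s) (hV : MeasurableSet V)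
    (hUd : IntegrableOn (fun v => GU v v) V μ) (hFd : IntegrableOn (fun v => GF v v) V μ)
    {r C : ℝ} (hr0 : 0 ≤ r) (hslack : 0 < r → ∫ v in V, GF v v ∂μ = C)
    (hle : ∀ v ∈ V, ∀ w ∈ V, GU v w + r * GF v w ≤ GU v v + r * GF v v) :
    exAnte μ V GU s ≤ ∫ v in V, GU v v ∂μ ∨ exAnte μ V GF s < C := by
  have h := exAnte_add_mul_le hs hU hF hV hUd hFd hle
  by_contra! hcon
  rcases hr0.eq_or_lt with rfl | hr
  · linarith
  · nlinarith [hslack hr]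

end Strategies

theorem ContinuousOn.diag {α β : Type*} [TopologicalSpace α] [TopologicalSpace β] {V : Set α}
    {G : α → α → β} (hG : ContinuousOn (Function.uncurry G) (V ×ˢ V)) :
    ContinuousOn (fun v => G v v) V :=
  hG.comp (continuousOn_id.prodMk continuousOn_id) fun _ hv => ⟨hv, hv⟩

section Deviations

variable {α : Type*} [MeasurableSpace α] {μ : Measure α} {V : Set α}

open scoped Classical in
theorem ae_restrict_le_of_forall_setIntegral_piecewise_le {f g : α → ℝ}
    (hf : IntegrableOn f V μ) (hg : IntegrableOn g V μ)
    (H : ∀ A, MeasurableSet A → ∫ v in V, A.piecewise f g v ∂μ ≤ ∫ v in V, g v ∂μ) :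
    f ≤ᵐ[μ.restrict V] g :=
  ae_le_of_forall_setIntegral_le hf hg fun A hA _ => by
    have h := H A hA
    rw [integral_piecewise hA hf.integrableOn hg.integrableOn,
      ← integral_add_compl hA hg] at h
    linarith

variable [TopologicalSpace α]

theorem le_on_of_ae_restrict_le {f g : α → ℝ} (hV : MeasurableSet V)
    (hdense : ∀ E ⊆ V, μ (V \ E) = 0 → V ⊆ closure E)
    (hf : ContinuousOn f V) (hg : ContinuousOn g V) (hfg : f ≤ᵐ[μ.restrict V] g) :
    ∀ v ∈ V, f v ≤ g v := by
  have hnull : μ (V \ (V ∩ {v | f v ≤ g v})) = 0 := by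
    rw [Filter.EventuallyLE, ae_restrict_iff' hV, ae_iff] at hfg
    rw [sdiff_self_inter]
    convert hfg using 2
    ext v
    simp
  intro v hv
  exact ContinuousWithinAt.closure_le (hdense _ inter_subset_left hnull hv)
    ((hf v hv).mono inter_subset_left) ((hg v hv).mono inter_subset_left) fun _ hy => hy.2

variable [OpensMeasurableSpace α] [T2Space α] [IsFiniteMeasure μ]

open scoped Classical in
theorem forall_le_of_forall_setIntegral_piecewise_le (hV : IsCompact V)
    (hdense : ∀ E ⊆ V, μ (V \ E) = 0 → V ⊆ closure E) {Φ : α → α → ℝ}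
    (hΦ : ContinuousOn (Function.uncurry Φ) (V ×ˢ V))
    (H : ∀ w ∈ V, ∀ A, MeasurableSet A →
      ∫ v in V, A.piecewise (fun v => Φ v w) (fun v => Φ v v) v ∂μ ≤ ∫ v in V, Φ v v ∂μ) :
    ∀ v ∈ V, ∀ w ∈ V, Φ v w ≤ Φ v v := by
  suffices ∀ w ∈ V, ∀ v ∈ V, Φ v w ≤ Φ v v from fun v hv w hw => this w hw v hv
  intro w hw
  have hcol := hΦ.uncurry_right w hw
  exact le_on_of_ae_restrict_le hV.measurableSet hdense hcol hΦ.diag <|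
    ae_restrict_le_of_forall_setIntegral_piecewise_le (hcol.integrableOn_compact hV)
      (hΦ.diag.integrableOn_compact hV) (H w hw)

theorem forall_le_of_forall_mem_payoffSet (hV : IsCompact V)
    (hdense : ∀ E ⊆ V, μ (V \ E) = 0 → V ⊆ closure E) {GU GF : α → α → ℝ}
    (hGU : ContinuousOn (Function.uncurry GU) (V ×ˢ V))
    (hGF : ContinuousOn (Function.uncurry GF) (V ×ˢ V)) (a b : ℝ)
    (hK : ∀ z ∈ payoffSet μ V GU GF,
      a * z.1 + b * z.2 ≤ a * ∫ v in V, GU v v ∂μ + b * ∫ v in V, GF v v ∂μ) :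
    ∀ v ∈ V, ∀ w ∈ V, a * GU v w + b * GF v w ≤ a * GU v v + b * GF v v := by
  classical
  have hlin : ∀ {f₁ f₂ : α → ℝ}, IntegrableOn f₁ V μ → IntegrableOn f₂ V μ →
      ∫ v in V, (a * f₁ v + b * f₂ v) ∂μ = a * ∫ v in V, f₁ v ∂μ + b * ∫ v in V, f₂ v ∂μ :=
    fun h₁ h₂ => by
      rw [integral_add (h₁.const_mul a) (h₂.const_mul b), integral_const_mul, integral_const_mul]
  refine forall_le_of_forall_setIntegral_piecewise_le hV hdense
    ((continuousOn_const.mul hGU).add (continuousOn_const.mul hGF)) fun w hw A hA => ?_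
  set g := A.piecewise (fun _ => w) id
  have hgV : MapsTo g V V := fun v hv => by by_cases h : v ∈ A <;> simp [g, h, hv, hw]
  have hcomp : ∀ G : α → α → ℝ,
      (fun v => G v (g v)) = A.piecewise (fun v => G v w) (fun v => G v v) := fun G => by
    ext v
    by_cases h : v ∈ A <;> simp [g, h]
  have hint : ∀ {G : α → α → ℝ}, ContinuousOn (Function.uncurry G) (V ×ˢ V) →
      IntegrableOn (fun v => G v (g v)) V μ := fun hG => by
    rw [hcomp]
    exact Integrable.piecewise hA ((hG.uncurry_right w hw).integrableOn_compact hV).integrableOn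
      (hG.diag.integrableOn_compact hV).integrableOn
  have hmem := hK _ (mem_payoffSet_of_deterministic hV.measurableSet
    (measurable_const.piecewise hA measurable_id) hgV (hint hGU) (hint hGF))
  rw [← hcomp fun v w => a * GU v w + b * GF v w, hlin (hint hGU) (hint hGF),
    hlin (hGU.diag.integrableOn_compact hV) (hGF.diag.integrableOn_compact hV)]
  exact hmem

end Deviations

section Gradient

variable {F : Type*} [NormedAddCommGroup F] [InnerProductSpace ℝ F] [CompleteSpace F]

theorem IsLocalMax.hasGradientAt_eq_zero {f : F → ℝ} {a f' : F} (h : IsLocalMax f a)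
    (hf : HasGradientAt f f' a) : f' = 0 :=
  (InnerProductSpace.toDual ℝ F).map_eq_zero_iff.1 (h.hasFDerivAt_eq_zero hf.hasFDerivAt)

theorem hasGradientAt_of_forall_sub_le_inner {V : Set F} {U : F → ℝ} {g : F → F} {v : F}
    (hV : V ∈ 𝓝 v) (hg : ContinuousAt g v)
    (H : ∀ a ∈ V, ∀ b ∈ V, U b - U a ≤ ⟪g b, b - a⟫) : HasGradientAt U (g v) v := by
  refine hasGradientAt_iff_hasFDerivAt.2 <| HasFDerivAt.of_isLittleO <|
    Asymptotics.isLittleO_iff.2 fun ε hε => ?_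
  have hgε : ∀ᶠ y in 𝓝 v, ‖g y - g v‖ ≤ ε := by
    simpa [dist_eq_norm] using hg.eventually (Metric.closedBall_mem_nhds (g v) hε)
  filter_upwards [hV, hgε] with y hy hgy
  have hvV := mem_of_mem_nhds hV
  have hup := H v hvV y hy
  have hlow := H y hy v hvV
  rw [← neg_sub y v, inner_neg_right] at hlow
  have hcs : ⟪g y - g v, y - v⟫ ≤ ε * ‖y - v‖ :=
    (real_inner_le_norm _ _).trans (mul_le_mul_of_nonneg_right hgy (norm_nonneg _))
  rw [inner_sub_left] at hcs
  rw [InnerProductSpace.toDual_apply_apply, Real.norm_eq_abs, abs_le]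
  constructor <;> nlinarith [norm_nonneg (y - v)]

variable [MeasurableSpace F] [OpensMeasurableSpace F] {μ : Measure F} [IsFiniteMeasure μ]
  {V : Set F}

theorem exists_mem_payoffSet_snd_gt (hV : IsCompact V)
    (hdense : ∀ E ⊆ V, μ (V \ E) = 0 → V ⊆ closure E) {GU GF : F → F → ℝ}
    (hGU : ContinuousOn (Function.uncurry GU) (V ×ˢ V))
    (hGF : ContinuousOn (Function.uncurry GF) (V ×ˢ V)) {fhat : F → F}
    (hfhat : ∀ v ∈ interior V, HasGradientAt (GF v) (fhat v) v)
    (hfrontier : μ (frontier V) = 0) (hfne : ∃ E ⊆ V, 0 < μ E ∧ ∀ v ∈ E, fhat v ≠ 0) :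
    ∃ z ∈ payoffSet μ V GU GF, ∫ v in V, GF v v ∂μ < z.2 := by
  by_contra! hmax
  have hle := forall_le_of_forall_mem_payoffSet hV hdense hGU hGF 0 1 (by simpa using hmax)
  obtain ⟨E, hEV, hEpos, hE⟩ := hfne
  obtain ⟨v, hvE, hv⟩ : ∃ v ∈ E, v ∈ interior V := by
    by_contra! h
    exact hEpos.ne' (measure_mono_null (fun v hvE =>
      (⟨subset_closure (hEV hvE), h v hvE⟩ : v ∈ closure V \ interior V))
      hfrontier)
  refine hE v hvE (IsLocalMax.hasGradientAt_eq_zero ?_ (hfhat v hv))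
  filter_upwards [mem_interior_iff_mem_nhds.1 hv] with w hw
  simpa using hle v (interior_subset hv) w hw

theorem exists_multiplier_forall_lagrangian_le (hV : IsCompact V)
    (hdense : ∀ E ⊆ V, μ (V \ E) = 0 → V ⊆ closure E) {GU GF : F → F → ℝ}
    (hGU : ContinuousOn (Function.uncurry GU) (V ×ˢ V))
    (hGF : ContinuousOn (Function.uncurry GF) (V ×ˢ V)) {fhat : F → F}
    (hfhat : ∀ v ∈ interior V, HasGradientAt (GF v) (fhat v) v)
    (hfrontier : μ (frontier V) = 0) (hfne : ∃ E ⊆ V, 0 < μ E ∧ ∀ v ∈ E, fhat v ≠ 0) {C : ℝ}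
    (hC : C ≤ ∫ v in V, GF v v ∂μ)
    (hIC : ∀ z ∈ payoffSet μ V GU GF, z.1 ≤ ∫ v in V, GU v v ∂μ ∨ z.2 < C) :
    ∃ r : ℝ, 0 ≤ r ∧ (0 < r → ∫ v in V, GF v v ∂μ = C) ∧
      ∀ v ∈ V, ∀ w ∈ V, GU v w + r * GF v w ≤ GU v v + r * GF v v := by
  obtain ⟨r, hr0, hslack, hmult⟩ := exists_lagrange_multiplier (convex_payoffSet hV.measurableSet)
    (mem_payoffSet_truthful hV.measurableSet (hGU.diag.integrableOn_compact hV)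
      (hGF.diag.integrableOn_compact hV)) hC hIC
    fun h => by rw [← h]; exact exists_mem_payoffSet_snd_gt hV hdense hGU hGF hfhat hfrontier hfne
  refine ⟨r, hr0, hslack, ?_⟩
  simpa only [one_mul] using forall_le_of_forall_mem_payoffSet hV hdense hGU hGF 1 r
    (by simpa only [one_mul] using hmult)

end Gradient

theorem continuousOn_uncurry_payoff {E Q' : Type*} [TopologicalSpace E] [TopologicalSpace Q']
    {V : Set E} {Q : Set Q'} {u : Q' → E → ℝ} {x : E → Q'} {p : E → ℝ}
    (hu : ContinuousOn (fun qv : Q' × E => u qv.1 qv.2) (Q ×ˢ V)) (hx : ContinuousOn x V)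
    (hxQ : MapsTo x V Q) (hp : ContinuousOn p V) (c : ℝ) :
    ContinuousOn (Function.uncurry fun v w => u (x w) v - c * p w) (V ×ˢ V) :=
  (hu.comp ((hx.comp continuousOn_snd fun _ hz => hz.2).prodMk continuousOn_fst)
    fun _ hz => ⟨hxQ hz.2, hz.1⟩).sub
    (continuousOn_const.mul (hp.comp continuousOn_snd fun _ hz => hz.2))

theorem surrogateUtility_sub_le_inner_iff {d D : ℕ} {V : Set (EuclideanSpace ℝ (Fin d))}
    {u f : EuclideanSpace ℝ (Fin D) → EuclideanSpace ℝ (Fin d) → ℝ}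
    {x : EuclideanSpace ℝ (Fin d) → EuclideanSpace ℝ (Fin D)}
    {p : EuclideanSpace ℝ (Fin d) → ℝ}
    {ustar fstar : EuclideanSpace ℝ (Fin D) → EuclideanSpace ℝ (Fin d)} {c₁ c₂ r : ℝ}
    (hulin : ∀ v ∈ V, ∀ w ∈ V, u (x w) v = ⟪ustar (x w), v⟫)
    (hflin : ∀ v ∈ V, ∀ w ∈ V, f (x w) v = ⟪fstar (x w), v⟫) :
    (∀ v ∈ V, ∀ v' ∈ V,
      surrogateUtility ustar fstar x p c₁ c₂ r v' - surrogateUtility ustar fstar x p c₁ c₂ r v ≤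
        ⟪surrogateOutcome ustar fstar r (x v'), v' - v⟫) ↔
    ∀ v ∈ V, ∀ w ∈ V, (u (x w) v - c₁ * p w) + r * (f (x w) v - c₂ * p w) ≤
      (u (x v) v - c₁ * p v) + r * (f (x v) v - c₂ * p v) := by
  have hlag : ∀ v ∈ V, ∀ w ∈ V,
      ⟪surrogateOutcome ustar fstar r (x w), v⟫ - (c₁ + r * c₂) * p w =
        (u (x w) v - c₁ * p w) + r * (f (x w) v - c₂ * p w) := fun v hv w hw => by
    rw [surrogateOutcome, inner_add_left, real_inner_smul_left, hulin v hv w hw,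
      hflin v hv w hw]
    ring
  refine forall₂_congr fun v hv => forall₂_congr fun w hw => ?_
  rw [← hlag v hv w hw, ← hlag v hv v hv, surrogateUtility, surrogateUtility, inner_sub_right]
  constructor <;> intro h <;> linarith

theorem incentiveCompatible_iff_surrogate_general {d D : ℕ}
    (V : Set (EuclideanSpace ℝ (Fin d))) (Q : Set (EuclideanSpace ℝ (Fin D)))
    (hVc : IsCompact V)
    (ρ : Measure (EuclideanSpace ℝ (Fin d))) [IsProbabilityMeasure ρ] (hρV : ρ Vᶜ = 0)
    (u f : EuclideanSpace ℝ (Fin D) → EuclideanSpace ℝ (Fin d) → ℝ)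
    (x : EuclideanSpace ℝ (Fin d) → EuclideanSpace ℝ (Fin D))
    (p : EuclideanSpace ℝ (Fin d) → ℝ)
    (hu : ContinuousOn (fun qv : EuclideanSpace ℝ (Fin D) × EuclideanSpace ℝ (Fin d) =>
      u qv.1 qv.2) (Q ×ˢ V))
    (hf : ContinuousOn (fun qv : EuclideanSpace ℝ (Fin D) × EuclideanSpace ℝ (Fin d) =>
      f qv.1 qv.2) (Q ×ˢ V))
    (hx : ContinuousOn x V) (hxQ : MapsTo x V Q) (hp : ContinuousOn p V)
    (c₁ c₂ : ℝ) (C : ℝ)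
    (hbdry : ρ (frontier V) = 0)
    (fhat : EuclideanSpace ℝ (Fin d) → EuclideanSpace ℝ (Fin d))
    (hfhat : ∀ v ∈ interior V,
      HasGradientAt (fun v' => f (x v') v - c₂ * p v') (fhat v) v)
    (ustar fstar : EuclideanSpace ℝ (Fin D) → EuclideanSpace ℝ (Fin d))
    (hustarc : ContinuousOn ustar Q) (hfstarc : ContinuousOn fstar Q)
    (hulin : ∀ q ∈ Q, ∀ v ∈ V, u q v = ⟪ustar q, v⟫)
    (hflin : ∀ q ∈ Q, ∀ v ∈ V, f q v = ⟪fstar q, v⟫)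
    (hdense : ∀ E : Set (EuclideanSpace ℝ (Fin d)), E ⊆ V → ρ E = 1 → V ⊆ closure E)
    (hfne : ∃ E : Set (EuclideanSpace ℝ (Fin d)), E ⊆ V ∧ 0 < ρ E ∧ ∀ v ∈ E, fhat v ≠ 0)
    :
    IncentiveCompatible V ρ u f x p c₁ c₂ C ↔
      ((∫ v in V, (f (x v) v - c₂ * p v) ∂ρ) ≥ C ∧
        ∃ r : ℝ, 0 ≤ r ∧
          (∀ v ∈ interior V,
            HasGradientAt (surrogateUtility ustar fstar x p c₁ c₂ r)
              (surrogateOutcome ustar fstar r (x v)) v) ∧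
          (∀ v ∈ V, ∀ v' ∈ V,
            surrogateUtility ustar fstar x p c₁ c₂ r v' -
                surrogateUtility ustar fstar x p c₁ c₂ r v ≤
              ⟪surrogateOutcome ustar fstar r (x v'), v' - v⟫) ∧
          (0 < r → (∫ v in V, (f (x v) v - c₂ * p v) ∂ρ) = C)
) := by
  have hVm := hVc.measurableSet
  have hdense' : ∀ E ⊆ V, ρ (V \ E) = 0 → V ⊆ closure E := fun E hE h0 => hdense E hE <| by
    rw [← sdiff_sdiff_cancel_left hE, measure_sdiff_null h0, ← prob_compl_eq_zero_iff hVm, hρV]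
  have hU := continuousOn_uncurry_payoff hu hx hxQ hp c₁
  have hF := continuousOn_uncurry_payoff hf hx hxQ hp c₂
  have hsurr := fun r => surrogateUtility_sub_le_inner_iff (p := p) (c₁ := c₁) (c₂ := c₂)
    (r := r) (fun v hv w hw => hulin _ (hxQ hw) v hv) (fun v hv w hw => hflin _ (hxQ hw) v hv)
  constructor
  · rintro ⟨hC, hIC⟩
    obtain ⟨r, hr0, hslack, hle⟩ := exists_multiplier_forall_lagrangian_le hVc hdense' hU hF
      hfhat hbdry hfne hC fun _ ⟨s, hs, hUs, hFs, hz⟩ =>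
        hz ▸ hIC s hs.1 hs.2.1 hs.2.2 hUs.1 hFs.1 hUs.2 hFs.2
    have hconv := (hsurr r).2 hle
    have hcont : ContinuousOn (fun w => surrogateOutcome ustar fstar r (x w)) V :=
      (hustarc.comp hx hxQ).add ((hfstarc.comp hx hxQ).const_smul r)
    refine ⟨hC, r, hr0, fun v hv => ?_, hconv, hslack⟩
    have hVv := mem_interior_iff_mem_nhds.1 hv
    exact hasGradientAt_of_forall_sub_le_inner hVv (hcont.continuousAt hVv) hconv
  · rintro ⟨hC, r, hr0, -, hconv, hslack⟩
    exact ⟨hC, fun s hsm hsp hsV hUi hFi hUo hFo =>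
      exAnte_le_or_lt_of_forall_lagrangian_le ⟨hsm, hsp, hsV⟩ ⟨hUi, hUo⟩ ⟨hFi, hFo⟩ hVm
        (hU.diag.integrableOn_compact hVc) (hF.diag.integrableOn_compact hVc) hr0 hslack
        ((hsurr r).1 hconv)⟩

/-- Theorem 3 (ic-iff): the payment-identity characterization of incentive compatibility
for quasi-linear player models. -/
theorem incentiveCompatible_iff_surrogate {d D : ℕ}
    (V : Set (EuclideanSpace ℝ (Fin d))) (Q : Set (EuclideanSpace ℝ (Fin D)))
    (hVc : IsCompact V) (hQc : IsCompact Q)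
    (ρ : Measure (EuclideanSpace ℝ (Fin d))) [IsProbabilityMeasure ρ] (hρV : ρ Vᶜ = 0)
    (u f : EuclideanSpace ℝ (Fin D) → EuclideanSpace ℝ (Fin d) → ℝ)
    (x : EuclideanSpace ℝ (Fin d) → EuclideanSpace ℝ (Fin D))
    (p : EuclideanSpace ℝ (Fin d) → ℝ)
    (hu : ContinuousOn (fun qv : EuclideanSpace ℝ (Fin D) × EuclideanSpace ℝ (Fin d) =>
      u qv.1 qv.2) (Q ×ˢ V))
    (hf : ContinuousOn (fun qv : EuclideanSpace ℝ (Fin D) × EuclideanSpace ℝ (Fin d) =>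
      f qv.1 qv.2) (Q ×ˢ V))
    (hx : ContinuousOn x V) (hxQ : MapsTo x V Q) (hp : ContinuousOn p V)
    (c₁ c₂ : ℝ) (hc₁ : c₁ = 0 ∨ c₁ = 1) (hc₂ : c₂ = 0 ∨ c₂ = 1) (C : ℝ)
    (hbdry : ρ (frontier V) = 0)
    (hpdiff : ∀ v ∈ interior V, DifferentiableAt ℝ p v)
    (uhat fhat : EuclideanSpace ℝ (Fin d) → EuclideanSpace ℝ (Fin d))
    (huhat : ∀ v ∈ interior V,
      HasGradientAt (fun v' => u (x v') v - c₁ * p v') (uhat v) v)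
    (hfhat : ∀ v ∈ interior V,
      HasGradientAt (fun v' => f (x v') v - c₂ * p v') (fhat v) v)
    (ustar fstar : EuclideanSpace ℝ (Fin D) → EuclideanSpace ℝ (Fin d))
    (hustarc : ContinuousOn ustar Q) (hfstarc : ContinuousOn fstar Q)
    (hulin : ∀ q ∈ Q, ∀ v ∈ V, u q v = ⟪ustar q, v⟫)
    (hflin : ∀ q ∈ Q, ∀ v ∈ V, f q v = ⟪fstar q, v⟫)
    (hustardiff : ∀ v ∈ interior V, DifferentiableAt ℝ (fun w => ustar (x w)) v)
    (hfstardiff : ∀ v ∈ interior V, DifferentiableAt ℝ (fun w => fstar (x w)) v)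
    (hconn : IsConnected V)
    (hdense : ∀ E : Set (EuclideanSpace ℝ (Fin d)), E ⊆ V → ρ E = 1 → V ⊆ closure E)
    (hfne : ∃ E : Set (EuclideanSpace ℝ (Fin d)), E ⊆ V ∧ 0 < ρ E ∧ ∀ v ∈ E, fhat v ≠ 0)
    (huhatc : ContinuousOn uhat V) (hfhatc : ContinuousOn fhat V)
    :
    IncentiveCompatible V ρ u f x p c₁ c₂ C ↔
      ((∫ v in V, (f (x v) v - c₂ * p v) ∂ρ) ≥ C ∧
        ∃ r : ℝ, 0 ≤ r ∧
          (∀ v ∈ interior V,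
            HasGradientAt (surrogateUtility ustar fstar x p c₁ c₂ r)
              (surrogateOutcome ustar fstar r (x v)) v) ∧
          (∀ v ∈ V, ∀ v' ∈ V,
            surrogateUtility ustar fstar x p c₁ c₂ r v' -
                surrogateUtility ustar fstar x p c₁ c₂ r v ≤
              ⟪surrogateOutcome ustar fstar r (x v'), v' - v⟫) ∧
          (0 < r → (∫ v in V, (f (x v) v - c₂ * p v) ∂ρ) = C)
) :=
  incentiveCompatible_iff_surrogate_general V Q hVc ρ hρV u f x p hu hf hx hxQ hp c₁ c₂ C hbdry fhat
    hfhat ustar fstar hustarc hfstarc hulin hflin hdense hfne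
end

section
/- Suppose ∫_V [f(x(v),v) − c₂·p(v)] dρ(v) ≥ C and there exists a constant r ≥ 0 such that, with the surrogate outcome ũ(q) := u*(q) + r·f*(q) and surrogate utility Ũ(v) := ⟨ũ(x(v)), v⟩ − (c₁ + r·c₂)·p(v): (i) Ũ is differentiable on the interior V̊ of V with ∇Ũ(v) = ũ(x(v)) for every v ∈ V̊; (ii) Ũ(v') − Ũ(v) ≤ ⟨ũ(x(v')), v' − v⟩ for all v, v' ∈ V; and (iii) if r > 0 then the ex-ante constraint is binding under truthful reporting. Then (x,p) is incentive compatible. -/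
open MeasureTheory Set

open scoped RealInnerProductSpace

/-! Reporting `v'` instead of the true type `v` cannot raise the Lagrangian
`u - c₁ p + r (f - c₂ p)`: with `u` and `f` linear in the type, this is inequality (ii) for the
surrogate utility `Ũ` rearranged. Averaging over any strategy and then over `ρ` gives
`U(s) + r F(s) ≤ U(truth) + r F(truth)`. If `r = 0` this is `U(s) ≤ U(truth)`; if `r > 0` the
constraint binds, `F(truth) = C`, so `F(s) ≥ C` again forces `U(s) ≤ U(truth)`. -/

theorem le_or_lt_of_add_mul_le {A A₀ B B₀ C r : ℝ} (hr : 0 ≤ r) (hbind : 0 < r → B₀ = C)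
    (h : A + r * B ≤ A₀ + r * B₀) : A ≤ A₀ ∨ B < C := by
  rcases hr.eq_or_lt with rfl | hpos
  · left; linarith
  · rw [hbind hpos] at h
    by_contra! hcon
    have := mul_le_mul_of_nonneg_left hcon.2 hr
    linarith [hcon.1]

theorem setIntegral_add_mul_le {α : Type*} [MeasurableSpace α] {μ : Measure α} {S : Set α}
    (hS : MeasurableSet S) {g h g' h' : α → ℝ} (hg : IntegrableOn g S μ)
    (hh : IntegrableOn h S μ) (hg' : IntegrableOn g' S μ) (hh' : IntegrableOn h' S μ) (r : ℝ)
    (hle : ∀ a ∈ S, g a + r * h a ≤ g' a + r * h' a) :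
    ∫ a in S, g a ∂μ + r * ∫ a in S, h a ∂μ ≤ ∫ a in S, g' a ∂μ + r * ∫ a in S, h' a ∂μ := by
  rw [← integral_const_mul, ← integral_const_mul, ← integral_add hg (hh.const_mul r),
    ← integral_add hg' (hh'.const_mul r)]
  exact setIntegral_mono_on (hg.add (hh.const_mul r)) (hg'.add (hh'.const_mul r)) hS hle

theorem setIntegral_add_mul_le_of_forall_le {α : Type*} [MeasurableSpace α] {μ : Measure α}
    [IsProbabilityMeasure μ] {S : Set α} (hS : MeasurableSet S) (hSc : μ Sᶜ = 0)
    {g h : α → ℝ} (hg : IntegrableOn g S μ) (hh : IntegrableOn h S μ) (r : ℝ) {K : ℝ}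
    (hle : ∀ a ∈ S, g a + r * h a ≤ K) :
    ∫ a in S, g a ∂μ + r * ∫ a in S, h a ∂μ ≤ K := by
  have hS1 : μ.real S = 1 := by
    rw [measureReal_def, (prob_compl_eq_zero_iff hS).1 hSc, ENNReal.toReal_one]
  have hconst : IntegrableOn (fun _ => K) S μ := integrableOn_const (by simp)
  simpa [setIntegral_const, hS1] using
    setIntegral_add_mul_le (h' := fun _ => 0) hS hg hh hconst integrableOn_zero r
      (by simpa using hle)

theorem ContinuousOn.integrableOn_sub_const_mul {X Y : Type*} [TopologicalSpace X] [T2Space X]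
    [MeasurableSpace X] [OpensMeasurableSpace X] [TopologicalSpace Y] {μ : Measure X}
    [IsFiniteMeasureOnCompacts μ] {V : Set X} {Q : Set Y} (hVc : IsCompact V) {u : Y → X → ℝ}
    (hu : ContinuousOn (fun qv : Y × X => u qv.1 qv.2) (Q ×ˢ V)) {x : X → Y}
    (hx : ContinuousOn x V) (hxQ : MapsTo x V Q) {p : X → ℝ} (hp : ContinuousOn p V) (c : ℝ) :
    IntegrableOn (fun v => u (x v) v - c * p v) V μ :=
  ((hu.comp (hx.prodMk continuousOn_id) fun _ hv => ⟨hxQ hv, hv⟩).sub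
    (continuousOn_const.mul hp)).integrableOn_compact hVc

theorem add_mul_le_of_surrogateUtility_sub_le {d D : ℕ}
    {ustar fstar : EuclideanSpace ℝ (Fin D) → EuclideanSpace ℝ (Fin d)}
    {x : EuclideanSpace ℝ (Fin d) → EuclideanSpace ℝ (Fin D)} {p : EuclideanSpace ℝ (Fin d) → ℝ}
    {c₁ c₂ r : ℝ} {v v' : EuclideanSpace ℝ (Fin d)}
    (h : surrogateUtility ustar fstar x p c₁ c₂ r v' - surrogateUtility ustar fstar x p c₁ c₂ r v ≤
      ⟪surrogateOutcome ustar fstar r (x v'), v' - v⟫) :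
    (⟪ustar (x v'), v⟫ - c₁ * p v') + r * (⟪fstar (x v'), v⟫ - c₂ * p v') ≤
      (⟪ustar (x v), v⟫ - c₁ * p v) + r * (⟪fstar (x v), v⟫ - c₂ * p v) := by
  simp only [surrogateUtility, surrogateOutcome, inner_add_left, real_inner_smul_left,
    inner_sub_right] at h
  linarith

theorem incentiveCompatible_of_surrogate_general {d D : ℕ}
    (V : Set (EuclideanSpace ℝ (Fin d))) (Q : Set (EuclideanSpace ℝ (Fin D)))
    (hVc : IsCompact V)
    (ρ : Measure (EuclideanSpace ℝ (Fin d))) [IsProbabilityMeasure ρ]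
    (u f : EuclideanSpace ℝ (Fin D) → EuclideanSpace ℝ (Fin d) → ℝ)
    (x : EuclideanSpace ℝ (Fin d) → EuclideanSpace ℝ (Fin D))
    (p : EuclideanSpace ℝ (Fin d) → ℝ)
    (hu : ContinuousOn (fun qv : EuclideanSpace ℝ (Fin D) × EuclideanSpace ℝ (Fin d) =>
      u qv.1 qv.2) (Q ×ˢ V))
    (hf : ContinuousOn (fun qv : EuclideanSpace ℝ (Fin D) × EuclideanSpace ℝ (Fin d) =>
      f qv.1 qv.2) (Q ×ˢ V))
    (hx : ContinuousOn x V) (hxQ : MapsTo x V Q) (hp : ContinuousOn p V)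
    (c₁ c₂ : ℝ) (C : ℝ)
    (ustar fstar : EuclideanSpace ℝ (Fin D) → EuclideanSpace ℝ (Fin d))
    (hulin : ∀ q ∈ Q, ∀ v ∈ V, u q v = ⟪ustar q, v⟫)
    (hflin : ∀ q ∈ Q, ∀ v ∈ V, f q v = ⟪fstar q, v⟫)
    (hge : (∫ v in V, (f (x v) v - c₂ * p v) ∂ρ) ≥ C)
    (hr : ∃ r : ℝ, 0 ≤ r ∧
          (∀ v ∈ interior V,
            HasGradientAt (surrogateUtility ustar fstar x p c₁ c₂ r)
              (surrogateOutcome ustar fstar r (x v)) v) ∧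
          (∀ v ∈ V, ∀ v' ∈ V,
            surrogateUtility ustar fstar x p c₁ c₂ r v' -
                surrogateUtility ustar fstar x p c₁ c₂ r v ≤
              ⟪surrogateOutcome ustar fstar r (x v'), v' - v⟫) ∧
          (0 < r → (∫ v in V, (f (x v) v - c₂ * p v) ∂ρ) = C)
) :
    IncentiveCompatible V ρ u f x p c₁ c₂ C := by
  obtain ⟨r, hr0, -, hineq, hbind⟩ := hr
  have hVm : MeasurableSet V := hVc.isClosed.measurableSet
  have hdeviation : ∀ v ∈ V, ∀ v' ∈ V,
      (u (x v') v - c₁ * p v') + r * (f (x v') v - c₂ * p v') ≤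
        (u (x v) v - c₁ * p v) + r * (f (x v) v - c₂ * p v) := by
    intro v hv v' hv'
    rw [hulin _ (hxQ hv') v hv, hflin _ (hxQ hv') v hv, hulin _ (hxQ hv) v hv,
      hflin _ (hxQ hv) v hv]
    exact add_mul_le_of_surrogateUtility_sub_le (hineq v hv v' hv')
  refine ⟨hge, fun s _ hsp hsV hsu hsf hIu hIf => le_or_lt_of_add_mul_le hr0 hbind ?_⟩
  refine setIntegral_add_mul_le hVm hIu hIf (hu.integrableOn_sub_const_mul hVc hx hxQ hp c₁)
    (hf.integrableOn_sub_const_mul hVc hx hxQ hp c₂) r fun v hv => ?_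
  have := hsp v hv
  exact setIntegral_add_mul_le_of_forall_le hVm (hsV v hv) (hsu v hv) (hsf v hv) r
    (hdeviation v hv)

/-- Sufficiency direction of Theorem 3 (ic-iff). -/
theorem incentiveCompatible_of_surrogate {d D : ℕ}
    (V : Set (EuclideanSpace ℝ (Fin d))) (Q : Set (EuclideanSpace ℝ (Fin D)))
    (hVc : IsCompact V) (hQc : IsCompact Q)
    (ρ : Measure (EuclideanSpace ℝ (Fin d))) [IsProbabilityMeasure ρ] (hρV : ρ Vᶜ = 0)
    (u f : EuclideanSpace ℝ (Fin D) → EuclideanSpace ℝ (Fin d) → ℝ)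
    (x : EuclideanSpace ℝ (Fin d) → EuclideanSpace ℝ (Fin D))
    (p : EuclideanSpace ℝ (Fin d) → ℝ)
    (hu : ContinuousOn (fun qv : EuclideanSpace ℝ (Fin D) × EuclideanSpace ℝ (Fin d) =>
      u qv.1 qv.2) (Q ×ˢ V))
    (hf : ContinuousOn (fun qv : EuclideanSpace ℝ (Fin D) × EuclideanSpace ℝ (Fin d) =>
      f qv.1 qv.2) (Q ×ˢ V))
    (hx : ContinuousOn x V) (hxQ : MapsTo x V Q) (hp : ContinuousOn p V)
    (c₁ c₂ : ℝ) (hc₁ : c₁ = 0 ∨ c₁ = 1) (hc₂ : c₂ = 0 ∨ c₂ = 1) (C : ℝ)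
    (hbdry : ρ (frontier V) = 0)
    (hpdiff : ∀ v ∈ interior V, DifferentiableAt ℝ p v)
    (uhat fhat : EuclideanSpace ℝ (Fin d) → EuclideanSpace ℝ (Fin d))
    (huhat : ∀ v ∈ interior V,
      HasGradientAt (fun v' => u (x v') v - c₁ * p v') (uhat v) v)
    (hfhat : ∀ v ∈ interior V,
      HasGradientAt (fun v' => f (x v') v - c₂ * p v') (fhat v) v)
    (ustar fstar : EuclideanSpace ℝ (Fin D) → EuclideanSpace ℝ (Fin d))
    (hustarc : ContinuousOn ustar Q) (hfstarc : ContinuousOn fstar Q)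
    (hulin : ∀ q ∈ Q, ∀ v ∈ V, u q v = ⟪ustar q, v⟫)
    (hflin : ∀ q ∈ Q, ∀ v ∈ V, f q v = ⟪fstar q, v⟫)
    (hustardiff : ∀ v ∈ interior V, DifferentiableAt ℝ (fun w => ustar (x w)) v)
    (hfstardiff : ∀ v ∈ interior V, DifferentiableAt ℝ (fun w => fstar (x w)) v)
    (hconn : IsConnected V)
    (hdense : ∀ E : Set (EuclideanSpace ℝ (Fin d)), E ⊆ V → ρ E = 1 → V ⊆ closure E)
    (hfne : ∃ E : Set (EuclideanSpace ℝ (Fin d)), E ⊆ V ∧ 0 < ρ E ∧ ∀ v ∈ E, fhat v ≠ 0)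
    (huhatc : ContinuousOn uhat V) (hfhatc : ContinuousOn fhat V)
    (hge : (∫ v in V, (f (x v) v - c₂ * p v) ∂ρ) ≥ C)
    (hr : ∃ r : ℝ, 0 ≤ r ∧
          (∀ v ∈ interior V,
            HasGradientAt (surrogateUtility ustar fstar x p c₁ c₂ r)
              (surrogateOutcome ustar fstar r (x v)) v) ∧
          (∀ v ∈ V, ∀ v' ∈ V,
            surrogateUtility ustar fstar x p c₁ c₂ r v' -
                surrogateUtility ustar fstar x p c₁ c₂ r v ≤
              ⟪surrogateOutcome ustar fstar r (x v'), v' - v⟫) ∧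
          (0 < r → (∫ v in V, (f (x v) v - c₂ * p v) ∂ρ) = C)
) :
    IncentiveCompatible V ρ u f x p c₁ c₂ C :=
  incentiveCompatible_of_surrogate_general V Q hVc ρ u f x p hu hf hx hxQ hp c₁ c₂ C ustar fstar
    hulin hflin hge hr
end

section
/- Suppose (x,p) is incentive compatible. Then there exists a constant r ≥ 0 such that, with the surrogate outcome ũ(q) := u*(q) + r·f*(q) and surrogate utility Ũ(v) := ⟨ũ(x(v)), v⟩ − (c₁ + r·c₂)·p(v): (i) Ũ is differentiable on the interior V̊ of V with ∇Ũ(v) = ũ(x(v)) for every v ∈ V̊; (ii) Ũ(v') − Ũ(v) ≤ ⟨ũ(x(v')), v' − v⟩ for all v, v' ∈ V (i.e., Ũ is convex); and (iii) if r > 0 then the ex-ante constraint is binding under truthful reporting. -/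
open MeasureTheory Set

open scoped RealInnerProductSpace

namespace SurrogateAux
open scoped Classical
abbrev Eu (d : ℕ) := EuclideanSpace ℝ (Fin d)
variable {d : ℕ}

/-- Admissible strategy. -/
def Adm (V : Set (Eu d)) (ρ : Measure (Eu d)) (g h : (Eu d) → (Eu d) → ℝ) (s : (Eu d) → Measure (Eu d)) : Prop :=
  Measurable s ∧ (∀ v ∈ V, IsProbabilityMeasure (s v)) ∧ (∀ v ∈ V, s v Vᶜ = 0) ∧
  (∀ v ∈ V, IntegrableOn (g v) V (s v)) ∧ (∀ v ∈ V, IntegrableOn (h v) V (s v)) ∧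
  IntegrableOn (fun v => ∫ v' in V, g v v' ∂ s v) V ρ ∧
  IntegrableOn (fun v => ∫ v' in V, h v v' ∂ s v) V ρ

lemma ae_dirac_restrict_eq {α : Type*} [MeasurableSpace α] [MeasurableSingletonClass α]
    (f : α → ℝ) (S : Set α) (a : α) :
    f =ᵐ[(Measure.dirac a).restrict S] (fun _ => f a) := by
  have h0 : Measure.dirac a {y | ¬ f y = f a} = 0 := by
    rw [Measure.dirac_apply]
    simp [Set.indicator]
  exact measure_mono_null (fun y hy => hy) ((Measure.restrict_le_self _).trans_eq h0 |> le_antisymm zero_le).symm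

lemma integrableOn_dirac {f : (Eu d) → ℝ} {S : Set (Eu d)} {a : (Eu d)} :
    IntegrableOn f S (Measure.dirac a) :=
  (integrable_const (f a)).congr (ae_dirac_restrict_eq f S a).symm

lemma setIntegral_dirac_mem {f : (Eu d) → ℝ} (S : Set (Eu d)) {a : (Eu d)} (ha : a ∈ S) :
    ∫ y in S, f y ∂(Measure.dirac a) = f a := by
  classical
  rw [setIntegral_dirac f a S, if_pos ha]

/-- The deviation strategy: report `b` on `B`, truthful elsewhere. -/
noncomputable def dev (B : Set (Eu d)) (b : (Eu d)) : (Eu d) → Measure (Eu d) :=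
  fun v => if v ∈ B then Measure.dirac b else Measure.dirac v

lemma dev_measurable {B : Set (Eu d)} (hB : MeasurableSet B) (b : (Eu d)) : Measurable (dev B b) :=
  Measurable.ite hB measurable_const Measure.measurable_dirac

lemma dev_prob {B : Set (Eu d)} (b : (Eu d)) (v : (Eu d)) : IsProbabilityMeasure (dev B b v) := by
  unfold dev; split <;> infer_instance

lemma dev_compl {V B : Set (Eu d)} (hVm : MeasurableSet V) {b : (Eu d)} (hb : b ∈ V) {v : (Eu d)} (hv : v ∈ V) :
    dev B b v Vᶜ = 0 := by
  unfold dev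
  split <;> rw [Measure.dirac_apply' _ hVm.compl] <;> simp [Set.indicator, hb, hv]

lemma dev_inner_integral {V B : Set (Eu d)} {b : (Eu d)} (hb : b ∈ V) (w : (Eu d) → (Eu d) → ℝ) {v : (Eu d)}
    (hv : v ∈ V) : (∫ v' in V, w v v' ∂ dev B b v) = if v ∈ B then w v b else w v v := by
  unfold dev
  by_cases hvB : v ∈ B
  · rw [if_pos hvB, if_pos hvB, setIntegral_dirac_mem V hb]
  · rw [if_neg hvB, if_neg hvB, setIntegral_dirac_mem V hv]

variable {V B : Set (Eu d)} {ρ : Measure (Eu d)} {b : (Eu d)}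

lemma dev_outer_integrableOn (hVm : MeasurableSet V) (hB : MeasurableSet B)
    (hb : b ∈ V) (w : (Eu d) → (Eu d) → ℝ) (hdiag : IntegrableOn (fun v => w v v) V ρ)
    (hcol : IntegrableOn (fun v => w v b) V ρ) :
    IntegrableOn (fun v => ∫ v' in V, w v v' ∂ dev B b v) V ρ := by
  have hpw : Integrable (B.piecewise (fun v => w v b) (fun v => w v v)) (ρ.restrict V) :=
    Integrable.piecewise hB hcol.integrableOn hdiag.integrableOn
  refine hpw.congr (((ae_restrict_mem hVm).mono fun v hv => ?_))
  have hdi := dev_inner_integral (B := B) hb w hv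
  by_cases hvB : v ∈ B <;> simp [Set.piecewise, hvB, hdi]

lemma dev_outer_integral (hVm : MeasurableSet V) (hB : MeasurableSet B) (hBV : B ⊆ V)
    (hb : b ∈ V) (w : (Eu d) → (Eu d) → ℝ) (hdiag : IntegrableOn (fun v => w v v) V ρ)
    (hcol : IntegrableOn (fun v => w v b) V ρ) :
    ∫ v in V, (∫ v' in V, w v v' ∂ dev B b v) ∂ρ
      = (∫ v in V, w v v ∂ρ) + ∫ v in B, (w v b - w v v) ∂ρ := by
  have heq : EqOn (fun v => ∫ v' in V, w v v' ∂ dev B b v)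
      (fun v => w v v + B.indicator (fun v => w v b - w v v) v) V := by
    intro v hv
    have hdi := dev_inner_integral (B := B) hb w hv
    by_cases hvB : v ∈ B <;> simp [Set.indicator, hvB, hdi]
  rw [setIntegral_congr_fun hVm heq]
  have hind : Integrable (B.indicator (fun v => w v b - w v v)) (ρ.restrict V) :=
    ((hcol.sub hdiag).integrableOn (s := B)).integrable_indicator hB
  rw [integral_add hdiag hind, integral_indicator hB, Measure.restrict_restrict hB,
    inter_eq_self_of_subset_left hBV]

lemma dev_adm (hVm : MeasurableSet V) (hB : MeasurableSet B) (hBV : B ⊆ V) (hb : b ∈ V)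
    (g h : (Eu d) → (Eu d) → ℝ)
    (hgd : IntegrableOn (fun v => g v v) V ρ) (hgc : IntegrableOn (fun v => g v b) V ρ)
    (hhd : IntegrableOn (fun v => h v v) V ρ) (hhc : IntegrableOn (fun v => h v b) V ρ) :
    Adm V ρ g h (dev B b) :=
  ⟨dev_measurable hB b, fun v _ => dev_prob b v, fun v hv => dev_compl hVm hb hv,
   fun v _ => by unfold dev; split <;> exact integrableOn_dirac,
   fun v _ => by unfold dev; split <;> exact integrableOn_dirac,
   dev_outer_integrableOn hVm hB hb g hgd hgc,
   dev_outer_integrableOn hVm hB hb h hhd hhc⟩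

lemma truthful_inner (w : (Eu d) → (Eu d) → ℝ) {v : (Eu d)} (hv : v ∈ V) :
    (∫ v' in V, w v v' ∂ Measure.dirac v) = w v v := setIntegral_dirac_mem V hv

lemma truthful_outer_integrableOn (hVm : MeasurableSet V) (w : (Eu d) → (Eu d) → ℝ)
    (hdiag : IntegrableOn (fun v => w v v) V ρ) :
    IntegrableOn (fun v => ∫ v' in V, w v v' ∂ Measure.dirac v) V ρ :=
  hdiag.congr_fun (fun v hv => (truthful_inner w hv).symm) hVm

lemma truthful_adm (hVm : MeasurableSet V) (g h : (Eu d) → (Eu d) → ℝ)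
    (hgd : IntegrableOn (fun v => g v v) V ρ) (hhd : IntegrableOn (fun v => h v v) V ρ) :
    Adm V ρ g h (fun v => Measure.dirac v) :=
  ⟨Measure.measurable_dirac, fun v _ => inferInstance,
   fun v hv => by rw [Measure.dirac_apply' _ hVm.compl]; simp [Set.indicator, hv],
   fun v _ => integrableOn_dirac, fun v _ => integrableOn_dirac,
   truthful_outer_integrableOn hVm g hgd, truthful_outer_integrableOn hVm h hhd⟩

lemma truthful_integral (hVm : MeasurableSet V) (w : (Eu d) → (Eu d) → ℝ) :
    ∫ v in V, (∫ v' in V, w v v' ∂ Measure.dirac v) ∂ρ = ∫ v in V, w v v ∂ρ :=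
  setIntegral_congr_fun hVm fun v hv => truthful_inner w hv


section PW
variable {V : Set (Eu d)} {ρ : Measure (Eu d)}

lemma rowCont (w : Eu d → Eu d → ℝ)
    (hwc : ContinuousOn (fun z : (Eu d) × (Eu d) => w z.1 z.2) (V ×ˢ V))
    {v : Eu d} (hv : v ∈ V) : ContinuousOn (fun z => w v z) V :=
  hwc.comp ((continuous_const.prodMk continuous_id).continuousOn)
    (fun z hz => Set.mk_mem_prod hv hz)

lemma colCont (w : Eu d → Eu d → ℝ)
    (hwc : ContinuousOn (fun z : (Eu d) × (Eu d) => w z.1 z.2) (V ×ˢ V))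
    {b : Eu d} (hb : b ∈ V) : ContinuousOn (fun z => w z b) V :=
  hwc.comp ((continuous_id.prodMk continuous_const).continuousOn)
    (fun z hz => Set.mk_mem_prod hz hb)

lemma diagCont (w : Eu d → Eu d → ℝ)
    (hwc : ContinuousOn (fun z : (Eu d) × (Eu d) => w z.1 z.2) (V ×ˢ V)) :
    ContinuousOn (fun z => w z z) V :=
  hwc.comp ((continuous_id.prodMk continuous_id).continuousOn)
    (fun z hz => Set.mk_mem_prod hz hz)

lemma pointwise_of_exante [IsProbabilityMeasure ρ]
    (hVc : IsCompact V) (hρV : ρ Vᶜ = 0)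
    (hdense : ∀ A : Set (Eu d), A ⊆ V → ρ A = 1 → V ⊆ closure A)
    (g h : Eu d → Eu d → ℝ)
    (hgc : ContinuousOn (fun z : (Eu d) × (Eu d) => g z.1 z.2) (V ×ˢ V))
    (hhc : ContinuousOn (fun z : (Eu d) × (Eu d) => h z.1 z.2) (V ×ˢ V))
    (w : Eu d → Eu d → ℝ)
    (hwc : ContinuousOn (fun z : (Eu d) × (Eu d) => w z.1 z.2) (V ×ˢ V))
    (hyp : ∀ s, Adm V ρ g h s →
      (∫ v in V, (∫ v' in V, w v v' ∂ s v) ∂ρ) ≤ ∫ v in V, w v v ∂ρ) :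
    ∀ v ∈ V, ∀ v' ∈ V, w v v' ≤ w v v := by
  have hVm : MeasurableSet V := hVc.isClosed.measurableSet
  -- integrability of diagonals and columns
  have hwd : IntegrableOn (fun v => w v v) V ρ :=
    (diagCont w hwc).integrableOn_compact hVc
  have hgd : IntegrableOn (fun v => g v v) V ρ :=
    (diagCont g hgc).integrableOn_compact hVc
  have hhd : IntegrableOn (fun v => h v v) V ρ :=
    (diagCont h hhc).integrableOn_compact hVc
  have hwcol : ∀ b ∈ V, IntegrableOn (fun v => w v b) V ρ := fun b hb =>
    (colCont w hwc hb).integrableOn_compact hVc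
  have hgcol : ∀ b ∈ V, IntegrableOn (fun v => g v b) V ρ := fun b hb =>
    (colCont g hgc hb).integrableOn_compact hVc
  have hhcol : ∀ b ∈ V, IntegrableOn (fun v => h v b) V ρ := fun b hb =>
    (colCont h hhc hb).integrableOn_compact hVc
  -- Step 1 : each bad set is null
  set Bset : Eu d → ℝ → Set (Eu d) := fun b q => {v | v ∈ V ∧ q < w v b - w v v} with hBset
  have step1 : ∀ b ∈ V, ∀ q : ℝ, 0 < q → ρ (Bset b q) = 0 := by
    intro b hb q hq
    by_contra hne
    have hδc : ContinuousOn (fun v => w v b - w v v) V :=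
      (colCont w hwc hb).sub (diagCont w hwc)
    obtain ⟨U, hU, hUeq⟩ := continuousOn_iff'.mp hδc (Set.Ioi q) isOpen_Ioi
    have hBeq : Bset b q = U ∩ V := by
      rw [← hUeq]; ext v
      simp only [hBset, Set.mem_setOf_eq, Set.mem_inter_iff, Set.mem_preimage, Set.mem_Ioi]
      tauto
    have hBm : MeasurableSet (Bset b q) := hBeq ▸ (hU.measurableSet.inter hVm)
    have hBV : Bset b q ⊆ V := fun v hv => hv.1
    have hadm : Adm V ρ g h (dev (Bset b q) b) :=
      dev_adm hVm hBm hBV hb g h hgd (hgcol b hb) hhd (hhcol b hb)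
    have hval := dev_outer_integral hVm hBm hBV hb w hwd (hwcol b hb)
    have hle := hyp _ hadm
    rw [hval] at hle
    have hint : IntegrableOn (fun v => w v b - w v v) (Bset b q) ρ := by
      have := ((hwcol b hb).mono_set hBV).sub (hwd.mono_set hBV)
      exact this
    have hlb := setIntegral_ge_of_const_le hBm (measure_ne_top ρ _)
      (fun v hv => le_of_lt hv.2) hint
    simp only [smul_eq_mul, measureReal_def] at hlb
    have hpos : 0 < q * (ρ (Bset b q)).toReal :=
      mul_pos hq (ENNReal.toReal_pos hne (measure_ne_top ρ _))
    linarith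
  -- Step 2 : countable dense subset of V
  obtain ⟨D₀, hD₀c, hD₀d⟩ := TopologicalSpace.exists_countable_dense (↥V)
  set D : Set (Eu d) := Subtype.val '' D₀ with hD
  have hDsub : D ⊆ V := by rintro y ⟨y₀, _, rfl⟩; exact y₀.2
  have hDc : D.Countable := hD₀c.image _
  have hDd : ∀ z ∈ V, ∀ r : ℝ, 0 < r → ∃ y ∈ D, dist y z < r := by
    intro z hz r hr
    obtain ⟨y, hyball, hyD⟩ := Metric.dense_iff.mp hD₀d ⟨z, hz⟩ r hr
    refine ⟨y.1, ⟨y, hyD, rfl⟩, ?_⟩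
    have := Metric.mem_ball.mp hyball
    rw [Subtype.dist_eq] at this
    rwa [dist_comm] at this
  -- Step 3 : the union of bad sets is null
  set N : Set (Eu d) := ⋃ b ∈ D, ⋃ n : ℕ, Bset b (1/(n+1)) with hN
  have hNnull : ρ N = 0 := by
    rw [hN, measure_biUnion_null_iff hDc]
    intro b hbD
    rw [measure_iUnion_null_iff]
    intro n
    exact step1 b (hDsub hbD) _ (by positivity)
  -- Step 4 : good set
  set Eg : Set (Eu d) := V \ N with hEg
  have hV1 : ρ V = 1 := by
    have := measure_add_measure_compl hVm (μ := ρ)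
    rw [hρV, add_zero] at this; rw [this]; exact measure_univ
  have hEg1 : ρ Eg = 1 := by rw [hEg, measure_diff_null hNnull]; exact hV1
  -- Step 5 : pointwise inequality on the good set
  have step5 : ∀ v ∈ Eg, ∀ v' ∈ V, w v v' ≤ w v v := by
    intro v hvE v' hv'
    by_contra hlt
    push_neg at hlt
    have hv : v ∈ V := hvE.1
    set δ0 : ℝ := w v v' - w v v with hδ0
    have hδ0pos : 0 < δ0 := by simp [hδ0]; linarith
    obtain ⟨n, hn⟩ := exists_nat_one_div_lt (show (0:ℝ) < δ0/2 by linarith)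
    have hrow := rowCont w hwc hv v' hv'
    rw [Metric.continuousWithinAt_iff] at hrow
    obtain ⟨δδ, hδδ, hδδball⟩ := hrow (δ0/2) (by linarith)
    obtain ⟨b, hbD, hbdist⟩ := hDd v' hv' δδ hδδ
    have hwb : dist (w v b) (w v v') < δ0/2 := hδδball (hDsub hbD) hbdist
    have hkey : (1:ℝ)/(n+1) < w v b - w v v := by
      have : |w v b - w v v'| < δ0/2 := by rwa [Real.dist_eq] at hwb
      have h1 : w v b > w v v' - δ0/2 := by cases' abs_lt.mp this with h _; linarith
      have : w v v' = w v v + δ0 := by simp [hδ0]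
      push_cast at hn ⊢
      linarith
    have hvB : v ∈ Bset b ((1:ℝ)/(n+1)) := ⟨hv, by push_cast; exact_mod_cast hkey⟩
    have : v ∈ N := by
      rw [hN]
      exact Set.mem_biUnion hbD (Set.mem_iUnion.mpr ⟨n, by exact_mod_cast hvB⟩)
    exact hvE.2 this
  -- Step 6 : extend to all of V by density
  intro v hv v' hv'
  have hcl : v ∈ closure Eg := hdense Eg (Set.diff_subset) hEg1 hv
  obtain ⟨seq, hseqE, hseqlim⟩ := mem_closure_iff_seq_limit.mp hcl
  have hseqV : ∀ n, seq n ∈ V := fun n => (hseqE n).1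
  have htendW : Filter.Tendsto seq Filter.atTop (nhdsWithin v V) :=
    tendsto_nhdsWithin_iff.mpr ⟨hseqlim, Filter.Eventually.of_forall hseqV⟩
  have hcol := ((colCont w hwc hv') v hv).tendsto.comp htendW
  have hdiag := ((diagCont w hwc) v hv).tendsto.comp htendW
  exact le_of_tendsto_of_tendsto' hcol hdiag (fun n => step5 _ (hseqE n) v' hv')

end PW

section Mix
variable {V : Set (Eu d)} {ρ : Measure (Eu d)}

noncomputable def mix (a b : ℝ) (s₁ s₂ : Eu d → Measure (Eu d)) : Eu d → Measure (Eu d) :=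
  fun v => ENNReal.ofReal a • s₁ v + ENNReal.ofReal b • s₂ v

lemma mix_inner {s₁ s₂ : Eu d → Measure (Eu d)} {a b : ℝ} (ha : 0 ≤ a) (hb : 0 ≤ b)
    (w : Eu d → Eu d → ℝ) {v : Eu d}
    (h₁ : IntegrableOn (w v) V (s₁ v)) (h₂ : IntegrableOn (w v) V (s₂ v)) :
    ∫ v' in V, w v v' ∂ (mix a b s₁ s₂ v)
      = a * (∫ v' in V, w v v' ∂ s₁ v) + b * (∫ v' in V, w v v' ∂ s₂ v) := by
  unfold mix
  rw [Measure.restrict_add, Measure.restrict_smul, Measure.restrict_smul,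
    integral_add_measure (h₁.smul_measure ENNReal.ofReal_ne_top)
      (h₂.smul_measure ENNReal.ofReal_ne_top),
    integral_smul_measure, integral_smul_measure,
    ENNReal.toReal_ofReal ha, ENNReal.toReal_ofReal hb]
  simp [smul_eq_mul]

lemma mix_inner_integrableOn {s₁ s₂ : Eu d → Measure (Eu d)} {a b : ℝ}
    (w : Eu d → Eu d → ℝ) {v : Eu d}
    (h₁ : IntegrableOn (w v) V (s₁ v)) (h₂ : IntegrableOn (w v) V (s₂ v)) :
    IntegrableOn (w v) V (mix a b s₁ s₂ v) := by
  unfold mix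
  rw [IntegrableOn, Measure.restrict_add, Measure.restrict_smul, Measure.restrict_smul]
  exact (h₁.smul_measure ENNReal.ofReal_ne_top).add_measure
    (h₂.smul_measure ENNReal.ofReal_ne_top)

lemma mix_outer_integrableOn (hVm : MeasurableSet V)
    {s₁ s₂ : Eu d → Measure (Eu d)} {a b : ℝ} (ha : 0 ≤ a) (hb : 0 ≤ b)
    (w : Eu d → Eu d → ℝ)
    (hi₁ : ∀ v ∈ V, IntegrableOn (w v) V (s₁ v)) (hi₂ : ∀ v ∈ V, IntegrableOn (w v) V (s₂ v))
    (ho₁ : IntegrableOn (fun v => ∫ v' in V, w v v' ∂ s₁ v) V ρ)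
    (ho₂ : IntegrableOn (fun v => ∫ v' in V, w v v' ∂ s₂ v) V ρ) :
    IntegrableOn (fun v => ∫ v' in V, w v v' ∂ mix a b s₁ s₂ v) V ρ := by
  refine ((ho₁.const_mul a).add (ho₂.const_mul b)).congr
    (((ae_restrict_mem hVm).mono fun v hv => ?_))
  exact (mix_inner ha hb w (hi₁ v hv) (hi₂ v hv)).symm

lemma mix_outer_integral (hVm : MeasurableSet V)
    {s₁ s₂ : Eu d → Measure (Eu d)} {a b : ℝ} (ha : 0 ≤ a) (hb : 0 ≤ b)
    (w : Eu d → Eu d → ℝ)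
    (hi₁ : ∀ v ∈ V, IntegrableOn (w v) V (s₁ v)) (hi₂ : ∀ v ∈ V, IntegrableOn (w v) V (s₂ v))
    (ho₁ : IntegrableOn (fun v => ∫ v' in V, w v v' ∂ s₁ v) V ρ)
    (ho₂ : IntegrableOn (fun v => ∫ v' in V, w v v' ∂ s₂ v) V ρ) :
    ∫ v in V, (∫ v' in V, w v v' ∂ mix a b s₁ s₂ v) ∂ρ
      = a * (∫ v in V, (∫ v' in V, w v v' ∂ s₁ v) ∂ρ)
        + b * (∫ v in V, (∫ v' in V, w v v' ∂ s₂ v) ∂ρ) := by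
  have heq : EqOn (fun v => ∫ v' in V, w v v' ∂ mix a b s₁ s₂ v)
      (fun v => a * (∫ v' in V, w v v' ∂ s₁ v) + b * (∫ v' in V, w v v' ∂ s₂ v)) V :=
    fun v hv => mix_inner ha hb w (hi₁ v hv) (hi₂ v hv)
  rw [setIntegral_congr_fun hVm heq, integral_add (ho₁.const_mul a) (ho₂.const_mul b),
    integral_const_mul, integral_const_mul]

lemma mix_adm (hVm : MeasurableSet V) {g h : Eu d → Eu d → ℝ}
    {s₁ s₂ : Eu d → Measure (Eu d)}
    (h₁ : Adm V ρ g h s₁) (h₂ : Adm V ρ g h s₂) {a b : ℝ} (ha : 0 ≤ a) (hb : 0 ≤ b)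
    (hab : a + b = 1) : Adm V ρ g h (mix a b s₁ s₂) := by
  obtain ⟨hm₁, hp₁, hc₁, hg₁, hh₁, hog₁, hoh₁⟩ := h₁
  obtain ⟨hm₂, hp₂, hc₂, hg₂, hh₂, hog₂, hoh₂⟩ := h₂
  refine ⟨?_, ?_, ?_, fun v hv => mix_inner_integrableOn g (hg₁ v hv) (hg₂ v hv),
    fun v hv => mix_inner_integrableOn h (hh₁ v hv) (hh₂ v hv),
    mix_outer_integrableOn hVm ha hb g hg₁ hg₂ hog₁ hog₂,
    mix_outer_integrableOn hVm ha hb h hh₁ hh₂ hoh₁ hoh₂⟩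
  · rw [Measure.measurable_measure]
    intro S hS
    simp only [mix, Measure.add_apply, Measure.smul_apply, smul_eq_mul]
    exact (((Measure.measurable_coe hS).comp hm₁).const_mul _).add
      (((Measure.measurable_coe hS).comp hm₂).const_mul _)
  · intro v hv
    haveI := hp₁ v hv; haveI := hp₂ v hv
    constructor
    simp only [mix, Measure.add_apply, Measure.smul_apply, smul_eq_mul, measure_univ, mul_one]
    rw [← ENNReal.ofReal_add ha hb, hab, ENNReal.ofReal_one]
  · intro v hv
    simp only [mix, Measure.add_apply, Measure.smul_apply, smul_eq_mul, hc₁ v hv, hc₂ v hv,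
      mul_zero, add_zero]

end Mix

lemma separation {P : Set (ℝ × ℝ)} (hconv : Convex ℝ P) (h0 : ((0:ℝ),(0:ℝ)) ∈ P)
    (hdisj : ∀ z ∈ P, 0 < z.1 → z.2 < 0) :
    ∃ α β : ℝ, 0 ≤ α ∧ 0 ≤ β ∧ (0 < α ∨ 0 < β) ∧
      ∀ z ∈ P, α * z.1 + β * z.2 ≤ 0 := by
  set K : Set (ℝ × ℝ) := {z | 0 < z.1} ∩ {z | 0 < z.2} with hK
  have hKopen : IsOpen K :=
    ((isOpen_lt continuous_const continuous_fst).inter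
      (isOpen_lt continuous_const continuous_snd))
  have hKconv : Convex ℝ K := by
    refine Convex.inter ?_ ?_
    · exact (convex_Ioi (0:ℝ)).linear_preimage (LinearMap.fst ℝ ℝ ℝ)
    · exact (convex_Ioi (0:ℝ)).linear_preimage (LinearMap.snd ℝ ℝ ℝ)
  have hdisj2 : Disjoint K P := Set.disjoint_left.mpr fun z hzK hzP =>
    absurd (hdisj z hzP hzK.1) (not_lt.mpr hzK.2.le)
  obtain ⟨φ, c, hKlt, hPge⟩ := geometric_hahn_banach_open hKconv hKopen hconv hdisj2
  set α := φ ((1:ℝ), (0:ℝ)) with hα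
  set β := φ ((0:ℝ), (1:ℝ)) with hβ
  have hφ : ∀ z : ℝ × ℝ, φ z = z.1 * α + z.2 * β := by
    intro z
    have hz : z = z.1 • ((1:ℝ),(0:ℝ)) + z.2 • ((0:ℝ),(1:ℝ)) := by
      ext <;> simp
    have h2 : φ z = z.1 * φ (1,0) + z.2 * φ (0,1) := by
      conv_lhs => rw [hz]
      rw [φ.map_add, φ.map_smul, φ.map_smul]
      simp [smul_eq_mul]
    simpa [hα, hβ] using h2
  have hcle : c ≤ 0 := by simpa [hφ] using hPge _ h0
  have hc0 : 0 ≤ c := by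
    by_contra hcneg
    push_neg at hcneg
    set M : ℝ := |α| + |β| + 1 with hM
    have hMpos : 0 < M := by positivity
    set t : ℝ := (-c)/(2*M) with ht
    have htpos : 0 < t := by
      apply div_pos (by linarith) (by linarith)
    have hmem : ((t,t) : ℝ × ℝ) ∈ K := ⟨htpos, htpos⟩
    have h1 : φ (t,t) < c := hKlt _ hmem
    rw [hφ] at h1
    simp only at h1
    have h2 : t * α + t * β ≥ -(t * M) := by
      have : |t * α + t * β| ≤ t * M := by
        calc |t * α + t * β| ≤ |t * α| + |t * β| := abs_add_le _ _
        _ = t * |α| + t * |β| := by rw [abs_mul, abs_mul, abs_of_pos htpos]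
        _ ≤ t * M := by nlinarith [abs_nonneg α, abs_nonneg β]
      linarith [neg_abs_le (t * α + t * β)]
    have h3 : -(t * M) = c/2 := by
      rw [ht]
      field_simp [hMpos.ne']
    have h4 : c/2 ≤ t * α + t * β := by rw [← h3]; exact h2
    linarith
  have hαle : α ≤ 0 := by
    by_contra hpos
    push_neg at hpos
    set t : ℝ := max 1 ((c - β + 1)/α) with ht
    have htpos : 0 < t := lt_of_lt_of_le one_pos (le_max_left _ _)
    have hmem : ((t,(1:ℝ)) : ℝ × ℝ) ∈ K := ⟨by simpa using htpos, by norm_num⟩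
    have h1 : φ (t,1) < c := hKlt _ hmem
    rw [hφ] at h1
    simp only [one_mul] at h1
    have h2 : (c - β + 1)/α ≤ t := le_max_right _ _
    have h3 : c - β + 1 ≤ t * α := by
      rw [div_le_iff₀ hpos] at h2
      linarith
    linarith
  have hβle : β ≤ 0 := by
    by_contra hpos
    push_neg at hpos
    set t : ℝ := max 1 ((c - α + 1)/β) with ht
    have htpos : 0 < t := lt_of_lt_of_le one_pos (le_max_left _ _)
    have hmem : (((1:ℝ),t) : ℝ × ℝ) ∈ K := ⟨by norm_num, by simpa using htpos⟩
    have h1 : φ (1,t) < c := hKlt _ hmem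
    rw [hφ] at h1
    simp only [one_mul] at h1
    have h2 : (c - α + 1)/β ≤ t := le_max_right _ _
    have h3 : c - α + 1 ≤ t * β := by
      rw [div_le_iff₀ hpos] at h2
      linarith
    linarith
  have hsum : α + β < c := by
    have := hKlt ((1:ℝ),(1:ℝ)) ⟨by norm_num, by norm_num⟩
    rw [hφ] at this
    simpa using this
  refine ⟨-α, -β, neg_nonneg.mpr hαle, neg_nonneg.mpr hβle, ?_, fun z hz => ?_⟩
  · rcases lt_or_eq_of_le hαle with hlt | heq
    · exact Or.inl (by linarith)
    · refine Or.inr ?_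
      rw [heq] at hsum
      linarith
  · have := hPge z hz
    rw [hφ] at this
    have hcz : (0:ℝ) ≤ z.1 * α + z.2 * β := le_trans hc0 this
    nlinarith

open scoped RealInnerProductSpace


lemma grad_assembly {d : ℕ} {S : Eu d → Eu d} {p : Eu d → ℝ} {ct : ℝ} {v : Eu d}
    (hS : DifferentiableAt ℝ S v) (hp : DifferentiableAt ℝ p v)
    (hψ : HasFDerivAt (fun w => ⟪v, S w⟫ - ct * p w) (0 : Eu d →L[ℝ] ℝ) v) :
    HasGradientAt (fun w => ⟪S w, w⟫ - ct * p w) (S v) v := by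
  have hS' : HasFDerivAt S (fderiv ℝ S v) v := hS.hasFDerivAt
  have hp' : HasFDerivAt p (fderiv ℝ p v) v := hp.hasFDerivAt
  set S' := fderiv ℝ S v
  set p' := fderiv ℝ p v
  -- derivative of ψ via product rule, and uniqueness
  have hψ2 : HasFDerivAt (fun w => ⟪v, S w⟫ - ct * p w)
      (((innerSL ℝ v).comp S') - ct • p') v := by
    exact (((innerSL ℝ v).hasFDerivAt.comp v hS')).sub (hp'.const_mul ct)
  have hEq0 : ((innerSL ℝ v).comp S') - ct • p' = 0 := hψ2.unique hψ
  -- product rule for the full function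
  have hIP : HasFDerivAt (fun w => ⟪S w, w⟫)
      ((fderivInnerCLM ℝ (S v, v)).comp (S'.prod (ContinuousLinearMap.id ℝ (Eu d)))) v :=
    hS'.inner ℝ (hasFDerivAt_id v)
  have hU : HasFDerivAt (fun w => ⟪S w, w⟫ - ct * p w)
      ((fderivInnerCLM ℝ (S v, v)).comp (S'.prod (ContinuousLinearMap.id ℝ (Eu d))) - ct • p') v :=
    hIP.sub (hp'.const_mul ct)
  rw [hasGradientAt_iff_hasFDerivAt]
  refine hU.congr_fderiv ?_
  ext y
  have h0y : ⟪v, S' y⟫ - ct * p' y = 0 := by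
    have := congrFun (congrArg (fun L => L.toFun) hEq0) y
    simpa [ContinuousLinearMap.sub_apply, ContinuousLinearMap.smul_apply, smul_eq_mul] using this
  simp only [InnerProductSpace.toDual_apply_apply, ContinuousLinearMap.coe_comp', Function.comp_apply,
    ContinuousLinearMap.sub_apply, ContinuousLinearMap.smul_apply, smul_eq_mul,
    ContinuousLinearMap.prod_apply, ContinuousLinearMap.coe_id', id_eq, fderivInnerCLM_apply]
  have hcm : ⟪S' y, v⟫ = ⟪v, S' y⟫ := real_inner_comm _ _
  linarith

end SurrogateAux


/-- Necessity direction of Theorem 3 (ic-iff). -/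
theorem surrogate_of_incentiveCompatible {d D : ℕ}
    (V : Set (EuclideanSpace ℝ (Fin d))) (Q : Set (EuclideanSpace ℝ (Fin D)))
    (hVc : IsCompact V) (hQc : IsCompact Q)
    (ρ : Measure (EuclideanSpace ℝ (Fin d))) [IsProbabilityMeasure ρ] (hρV : ρ Vᶜ = 0)
    (u f : EuclideanSpace ℝ (Fin D) → EuclideanSpace ℝ (Fin d) → ℝ)
    (x : EuclideanSpace ℝ (Fin d) → EuclideanSpace ℝ (Fin D))
    (p : EuclideanSpace ℝ (Fin d) → ℝ)
    (hu : ContinuousOn (fun qv : EuclideanSpace ℝ (Fin D) × EuclideanSpace ℝ (Fin d) =>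
      u qv.1 qv.2) (Q ×ˢ V))
    (hf : ContinuousOn (fun qv : EuclideanSpace ℝ (Fin D) × EuclideanSpace ℝ (Fin d) =>
      f qv.1 qv.2) (Q ×ˢ V))
    (hx : ContinuousOn x V) (hxQ : MapsTo x V Q) (hp : ContinuousOn p V)
    (c₁ c₂ : ℝ) (hc₁ : c₁ = 0 ∨ c₁ = 1) (hc₂ : c₂ = 0 ∨ c₂ = 1) (C : ℝ)
    (hbdry : ρ (frontier V) = 0)
    (hpdiff : ∀ v ∈ interior V, DifferentiableAt ℝ p v)
    (uhat fhat : EuclideanSpace ℝ (Fin d) → EuclideanSpace ℝ (Fin d))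
    (huhat : ∀ v ∈ interior V,
      HasGradientAt (fun v' => u (x v') v - c₁ * p v') (uhat v) v)
    (hfhat : ∀ v ∈ interior V,
      HasGradientAt (fun v' => f (x v') v - c₂ * p v') (fhat v) v)
    (ustar fstar : EuclideanSpace ℝ (Fin D) → EuclideanSpace ℝ (Fin d))
    (hustarc : ContinuousOn ustar Q) (hfstarc : ContinuousOn fstar Q)
    (hulin : ∀ q ∈ Q, ∀ v ∈ V, u q v = ⟪ustar q, v⟫)
    (hflin : ∀ q ∈ Q, ∀ v ∈ V, f q v = ⟪fstar q, v⟫)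
    (hustardiff : ∀ v ∈ interior V, DifferentiableAt ℝ (fun w => ustar (x w)) v)
    (hfstardiff : ∀ v ∈ interior V, DifferentiableAt ℝ (fun w => fstar (x w)) v)
    (hconn : IsConnected V)
    (hdense : ∀ E : Set (EuclideanSpace ℝ (Fin d)), E ⊆ V → ρ E = 1 → V ⊆ closure E)
    (hfne : ∃ E : Set (EuclideanSpace ℝ (Fin d)), E ⊆ V ∧ 0 < ρ E ∧ ∀ v ∈ E, fhat v ≠ 0)
    (huhatc : ContinuousOn uhat V) (hfhatc : ContinuousOn fhat V)
    (hic : IncentiveCompatible V ρ u f x p c₁ c₂ C) :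
    ∃ r : ℝ, 0 ≤ r ∧
          (∀ v ∈ interior V,
            HasGradientAt (surrogateUtility ustar fstar x p c₁ c₂ r)
              (surrogateOutcome ustar fstar r (x v)) v) ∧
          (∀ v ∈ V, ∀ v' ∈ V,
            surrogateUtility ustar fstar x p c₁ c₂ r v' -
                surrogateUtility ustar fstar x p c₁ c₂ r v ≤
              ⟪surrogateOutcome ustar fstar r (x v'), v' - v⟫) ∧
          (0 < r → (∫ v in V, (f (x v) v - c₂ * p v) ∂ρ) = C)
 := by
  classical
  obtain ⟨hIC0, hICs⟩ := hic
  have hVm : MeasurableSet V := hVc.isClosed.measurableSet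
  set gu : EuclideanSpace ℝ (Fin d) → EuclideanSpace ℝ (Fin d) → ℝ :=
    fun v v' => u (x v') v - c₁ * p v' with hgu_def
  set gf : EuclideanSpace ℝ (Fin d) → EuclideanSpace ℝ (Fin d) → ℝ :=
    fun v v' => f (x v') v - c₂ * p v' with hgf_def
  -- joint continuity
  have hpsnd : ContinuousOn (fun z : EuclideanSpace ℝ (Fin d) × EuclideanSpace ℝ (Fin d) =>
      p z.2) (V ×ˢ V) :=
    hp.comp continuous_snd.continuousOn (fun z hz => hz.2)
  have hxsnd : ContinuousOn (fun z : EuclideanSpace ℝ (Fin d) × EuclideanSpace ℝ (Fin d) =>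
      x z.2) (V ×ˢ V) :=
    hx.comp continuous_snd.continuousOn (fun z hz => hz.2)
  have hφ : ContinuousOn (fun z : EuclideanSpace ℝ (Fin d) × EuclideanSpace ℝ (Fin d) =>
      ((x z.2, z.1) : EuclideanSpace ℝ (Fin D) × EuclideanSpace ℝ (Fin d))) (V ×ˢ V) :=
    hxsnd.prodMk continuous_fst.continuousOn
  have hφmaps : MapsTo (fun z : EuclideanSpace ℝ (Fin d) × EuclideanSpace ℝ (Fin d) =>
      ((x z.2, z.1) : EuclideanSpace ℝ (Fin D) × EuclideanSpace ℝ (Fin d))) (V ×ˢ V) (Q ×ˢ V) :=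
    fun z hz => Set.mk_mem_prod (hxQ hz.2) hz.1
  have hguC : ContinuousOn (fun z : EuclideanSpace ℝ (Fin d) × EuclideanSpace ℝ (Fin d) =>
      gu z.1 z.2) (V ×ˢ V) :=
    (hu.comp hφ hφmaps).sub (continuousOn_const.mul hpsnd)
  have hgfC : ContinuousOn (fun z : EuclideanSpace ℝ (Fin d) × EuclideanSpace ℝ (Fin d) =>
      gf z.1 z.2) (V ×ˢ V) :=
    (hf.comp hφ hφmaps).sub (continuousOn_const.mul hpsnd)
  -- diagonal integrability
  have hguD : IntegrableOn (fun v => gu v v) V ρ :=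
    (SurrogateAux.diagCont gu hguC).integrableOn_compact hVc
  have hgfD : IntegrableOn (fun v => gf v v) V ρ :=
    (SurrogateAux.diagCont gf hgfC).integrableOn_compact hVc
  set Ubar : ℝ := ∫ v in V, gu v v ∂ρ with hUbar_def
  set Fbar : ℝ := ∫ v in V, gf v v ∂ρ with hFbar_def
  set IU : (EuclideanSpace ℝ (Fin d) → Measure (EuclideanSpace ℝ (Fin d))) → ℝ :=
    fun s => ∫ v in V, (∫ v' in V, gu v v' ∂ s v) ∂ρ with hIU_def
  set IF : (EuclideanSpace ℝ (Fin d) → Measure (EuclideanSpace ℝ (Fin d))) → ℝ :=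
    fun s => ∫ v in V, (∫ v' in V, gf v v' ∂ s v) ∂ρ with hIF_def
  have hFbarC : Fbar ≥ C := hIC0
  have hICadm : ∀ s, SurrogateAux.Adm V ρ gu gf s → (IU s ≤ Ubar ∨ IF s < C) := by
    intro s hs
    obtain ⟨h1, h2, h3, h4, h5, h6, h7⟩ := hs
    exact hICs s h1 h2 h3 h4 h5 h6 h7
  -- the truthful strategy
  have htruthAdm : SurrogateAux.Adm V ρ gu gf (fun v => Measure.dirac v) :=
    SurrogateAux.truthful_adm hVm gu gf hguD hgfD
  have htruthIU : IU (fun v => Measure.dirac v) = Ubar :=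
    SurrogateAux.truthful_integral hVm gu
  have htruthIF : IF (fun v => Measure.dirac v) = Fbar :=
    SurrogateAux.truthful_integral hVm gf
  -- the main dichotomy : produce r together with the key ex-ante Lagrangian bound
  have main : ∃ r : ℝ, 0 ≤ r ∧ (0 < r → Fbar = C) ∧
      ∀ a ∈ V, ∀ b ∈ V, gu a b + r * gf a b ≤ gu a a + r * gf a a := by
    by_cases hFb : Fbar = C
    · -- binding case : separation argument
      set P : Set (ℝ × ℝ) := {z | ∃ s, SurrogateAux.Adm V ρ gu gf s ∧
          z.1 = IU s - Ubar ∧ z.2 = IF s - C} with hP_def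
      have hPconv : Convex ℝ P := by
        rintro z₁ ⟨s₁, hs₁, hz₁1, hz₁2⟩ z₂ ⟨s₂, hs₂, hz₂1, hz₂2⟩ a b ha hb hab
        refine ⟨SurrogateAux.mix a b s₁ s₂,
          SurrogateAux.mix_adm hVm hs₁ hs₂ ha hb hab, ?_, ?_⟩
        · have hmx : IU (SurrogateAux.mix a b s₁ s₂) = a * IU s₁ + b * IU s₂ :=
            SurrogateAux.mix_outer_integral hVm ha hb gu hs₁.2.2.2.1 hs₂.2.2.2.1
              hs₁.2.2.2.2.2.1 hs₂.2.2.2.2.2.1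
          show a * z₁.1 + b * z₂.1 = _
          rw [hz₁1, hz₂1, hmx]
          linear_combination (-Ubar) * hab
        · have hmx : IF (SurrogateAux.mix a b s₁ s₂) = a * IF s₁ + b * IF s₂ :=
            SurrogateAux.mix_outer_integral hVm ha hb gf hs₁.2.2.2.2.1 hs₂.2.2.2.2.1
              hs₁.2.2.2.2.2.2 hs₂.2.2.2.2.2.2
          show a * z₁.2 + b * z₂.2 = _
          rw [hz₁2, hz₂2, hmx]
          linear_combination (-C) * hab
      have h0P : ((0:ℝ),(0:ℝ)) ∈ P := by
        refine ⟨fun v => Measure.dirac v, htruthAdm, ?_, ?_⟩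
        · show (0:ℝ) = _
          rw [htruthIU]; ring
        · show (0:ℝ) = _
          rw [htruthIF, hFb]; ring
      have hdisjP : ∀ z ∈ P, 0 < z.1 → z.2 < 0 := by
        rintro z ⟨s, hs, h1, h2⟩ hz1
        rcases hICadm s hs with hle | hlt
        · exfalso; rw [h1] at hz1; linarith
        · rw [h2]; linarith
      obtain ⟨α, β, hα0, hβ0, hposs, hbound⟩ := SurrogateAux.separation hPconv h0P hdisjP
      have hboundS : ∀ s, SurrogateAux.Adm V ρ gu gf s →
          α * (IU s - Ubar) + β * (IF s - C) ≤ 0 := by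
        intro s hs
        have h := hbound (IU s - Ubar, IF s - C) ⟨s, hs, rfl, rfl⟩
        simpa using h
      by_cases hα : 0 < α
      · -- finite multiplier r = β/α
        refine ⟨β/α, div_nonneg hβ0 hα0, fun _ => hFb, ?_⟩
        apply SurrogateAux.pointwise_of_exante hVc hρV hdense gu gf hguC hgfC
          (fun a b => gu a b + (β/α) * gf a b)
          (hguC.add (continuousOn_const.mul hgfC))
        intro s hs
        have hinner : EqOn (fun v => ∫ v' in V, (gu v v' + (β/α) * gf v v') ∂ s v)
            (fun v => (∫ v' in V, gu v v' ∂ s v) + (β/α) * (∫ v' in V, gf v v' ∂ s v)) V := by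
          intro v hv
          simp only
          rw [integral_add (hs.2.2.2.1 v hv) ((hs.2.2.2.2.1 v hv).const_mul (β/α)),
            integral_const_mul]
        calc ∫ v in V, (∫ v' in V, (gu v v' + (β/α) * gf v v') ∂ s v) ∂ρ
            = IU s + (β/α) * IF s := by
              rw [setIntegral_congr_fun hVm hinner,
                integral_add hs.2.2.2.2.2.1 (hs.2.2.2.2.2.2.const_mul (β/α)),
                integral_const_mul]
          _ ≤ Ubar + (β/α) * Fbar := by
              have hb := hboundS s hs
              have hdiv : (α * (IU s - Ubar) + β * (IF s - C))/α ≤ 0 :=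
                div_nonpos_of_nonpos_of_nonneg hb hα.le
              have hcalc : (IU s - Ubar) + (β/α) * (IF s - C)
                  = (α * (IU s - Ubar) + β * (IF s - C))/α := by
                field_simp
              rw [hFb]
              nlinarith [hdiv, hcalc]
          _ = ∫ v in V, (gu v v + (β/α) * gf v v) ∂ρ := by
              rw [integral_add hguD (hgfD.const_mul (β/α)), integral_const_mul]
      · -- degenerate direction : contradicts hfne
        exfalso
        have hαz : α = 0 := le_antisymm (not_lt.mp hα) hα0
        have hβpos : 0 < β := hposs.resolve_left hα
        have hFle : ∀ s, SurrogateAux.Adm V ρ gu gf s → IF s ≤ Fbar := by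
          intro s hs
          have hb := hboundS s hs
          rw [hαz] at hb
          rw [hFb]
          nlinarith
        have hptF : ∀ a ∈ V, ∀ b ∈ V, gf a b ≤ gf a a := by
          apply SurrogateAux.pointwise_of_exante hVc hρV hdense gu gf hguC hgfC gf hgfC
          intro s hs
          exact hFle s hs
        obtain ⟨Ef, hEfV, hEfpos, hEfne⟩ := hfne
        have hsub : Ef \ interior V ⊆ frontier V := by
          intro y hy
          rw [hVc.isClosed.frontier_eq]
          exact ⟨hEfV hy.1, hy.2⟩
        have h0 : ρ (Ef \ interior V) = 0 := measure_mono_null hsub hbdry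
        have hpos2 : ρ (Ef ∩ interior V) ≠ 0 := by
          intro hzero
          have hcover : ρ Ef ≤ ρ (Ef ∩ interior V) + ρ (Ef \ interior V) := by
            refine (measure_mono ?_).trans (measure_union_le _ _)
            intro y hy
            by_cases hyi : y ∈ interior V
            · exact Or.inl ⟨hy, hyi⟩
            · exact Or.inr ⟨hy, hyi⟩
          rw [hzero, h0, add_zero] at hcover
          exact absurd (le_antisymm hcover zero_le) hEfpos.ne'
        obtain ⟨v, hvEf, hvint⟩ := nonempty_of_measure_ne_zero hpos2
        have hvV : v ∈ V := interior_subset hvint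
        have hloc : IsLocalMax (fun b => gf v b) v := by
          filter_upwards [isOpen_interior.mem_nhds hvint] with b hb
          exact hptF v hvV b (interior_subset hb)
        have hgradF := (hfhat v hvint).hasFDerivAt
        have hz := hloc.hasFDerivAt_eq_zero hgradF
        have hfz : fhat v = 0 := by
          have h2 := congrArg (fun L => (InnerProductSpace.toDual ℝ
            (EuclideanSpace ℝ (Fin d))).symm L) hz
          simpa using h2
        exact hEfne v hvEf hfz
    · -- slack case : r = 0
      have hFgt : C < Fbar := lt_of_le_of_ne hFbarC (Ne.symm hFb)
      have hUle : ∀ s, SurrogateAux.Adm V ρ gu gf s → IU s ≤ Ubar := by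
        intro s hs
        by_contra hlt
        push_neg at hlt
        set T : ℝ := IF s with hT_def
        set lam : ℝ := min 1 ((Fbar - C)/(|Fbar - T| + 1)) with hlam_def
        have hlam_pos : 0 < lam := lt_min one_pos (div_pos (by linarith) (by positivity))
        have hlam_le : lam ≤ 1 := min_le_left _ _
        have hmixadm := SurrogateAux.mix_adm hVm hs htruthAdm hlam_pos.le
          (by linarith : (0:ℝ) ≤ 1 - lam) (by ring)
        have hmixIU : IU (SurrogateAux.mix lam (1-lam) s (fun v => Measure.dirac v))
            = lam * IU s + (1-lam) * Ubar := by
          have h := SurrogateAux.mix_outer_integral (ρ := ρ) hVm hlam_pos.le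
            (by linarith : (0:ℝ) ≤ 1 - lam) gu hs.2.2.2.1 htruthAdm.2.2.2.1
            hs.2.2.2.2.2.1 htruthAdm.2.2.2.2.2.1
          have h2 : (∫ v in V, (∫ v' in V, gu v v' ∂ Measure.dirac v) ∂ρ) = Ubar :=
            SurrogateAux.truthful_integral hVm gu
          rw [h2] at h
          exact h
        have hmixIF : IF (SurrogateAux.mix lam (1-lam) s (fun v => Measure.dirac v))
            = lam * IF s + (1-lam) * Fbar := by
          have h := SurrogateAux.mix_outer_integral (ρ := ρ) hVm hlam_pos.le
            (by linarith : (0:ℝ) ≤ 1 - lam) gf hs.2.2.2.2.1 htruthAdm.2.2.2.2.1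
            hs.2.2.2.2.2.2 htruthAdm.2.2.2.2.2.2
          have h2 : (∫ v in V, (∫ v' in V, gf v v' ∂ Measure.dirac v) ∂ρ) = Fbar :=
            SurrogateAux.truthful_integral hVm gf
          rw [h2] at h
          exact h
        rcases hICadm _ hmixadm with hle | hltC
        · rw [hmixIU] at hle
          nlinarith
        · rw [hmixIF] at hltC
          have h1 : Fbar - C < lam * (Fbar - T) := by nlinarith
          have h2 : lam * (Fbar - T) ≤ lam * |Fbar - T| :=
            mul_le_mul_of_nonneg_left (le_abs_self _) hlam_pos.le
          have h3 : lam * |Fbar - T| ≤ ((Fbar - C)/(|Fbar - T| + 1)) * |Fbar - T| :=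
            mul_le_mul_of_nonneg_right (min_le_right _ _) (abs_nonneg _)
          have h4 : ((Fbar - C)/(|Fbar - T| + 1)) * |Fbar - T| < Fbar - C := by
            rw [div_mul_eq_mul_div, div_lt_iff₀ (by positivity)]
            nlinarith [abs_nonneg (Fbar - T)]
          linarith
      refine ⟨0, le_refl 0, fun hcon => absurd hcon (lt_irrefl 0), ?_⟩
      have hpt : ∀ a ∈ V, ∀ b ∈ V, gu a b ≤ gu a a := by
        apply SurrogateAux.pointwise_of_exante hVc hρV hdense gu gf hguC hgfC gu hguC
        intro s hs
        exact hUle s hs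
      intro a ha b hb
      have := hpt a ha b hb
      nlinarith
  obtain ⟨r, hr0, hbind, hkey⟩ := main
  refine ⟨r, hr0, ?_, ?_, hbind⟩
  · -- (i) gradient statement
    intro v hv
    have hvV : v ∈ V := interior_subset hv
    have hloc : IsLocalMax (fun b => gu v b + r * gf v b) v := by
      filter_upwards [isOpen_interior.mem_nhds hv] with b hb
      exact hkey v hvV b (interior_subset hb)
    have hW : HasFDerivAt (fun b => gu v b + r * gf v b)
        ((InnerProductSpace.toDual ℝ (EuclideanSpace ℝ (Fin d)) (uhat v))
          + r • (InnerProductSpace.toDual ℝ (EuclideanSpace ℝ (Fin d)) (fhat v))) v :=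
      ((huhat v hv).hasFDerivAt).add (((hfhat v hv).hasFDerivAt).const_mul r)
    have hzero := hloc.hasFDerivAt_eq_zero hW
    rw [hzero] at hW
    have heq : (fun w => ⟪v, surrogateOutcome ustar fstar r (x w)⟫ - (c₁ + r*c₂) * p w)
        =ᶠ[nhds v] (fun b => gu v b + r * gf v b) := by
      filter_upwards [isOpen_interior.mem_nhds hv] with b hb
      have hbV : b ∈ V := interior_subset hb
      simp only [hgu_def, hgf_def, surrogateOutcome, inner_add_right, real_inner_smul_right,
        hulin (x b) (hxQ hbV) v hvV, hflin (x b) (hxQ hbV) v hvV]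
      rw [real_inner_comm v (ustar (x b)), real_inner_comm v (fstar (x b))]
      ring
    have hψ : HasFDerivAt (fun w => ⟪v, surrogateOutcome ustar fstar r (x w)⟫
        - (c₁ + r*c₂) * p w) (0 : EuclideanSpace ℝ (Fin d) →L[ℝ] ℝ) v :=
      hW.congr_of_eventuallyEq heq
    have hSdiff : DifferentiableAt ℝ (fun w => surrogateOutcome ustar fstar r (x w)) v :=
      (hustardiff v hv).add ((hfstardiff v hv).const_smul r)
    exact SurrogateAux.grad_assembly hSdiff (hpdiff v hv) hψ
  · -- (ii) convexity inequality
    intro v hv v' hv'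
    have h1 := hkey v hv v' hv'
    have lin : ∀ bb ∈ V, gu v bb + r * gf v bb
        = ⟪surrogateOutcome ustar fstar r (x bb), v⟫ - (c₁ + r*c₂) * p bb := by
      intro bb hbb
      simp only [hgu_def, hgf_def, surrogateOutcome, inner_add_left, real_inner_smul_left,
        hulin (x bb) (hxQ hbb) v hv, hflin (x bb) (hxQ hbb) v hv]
      ring
    rw [lin v' hv', lin v hv] at h1
    simp only [surrogateUtility, inner_sub_right]
    linarith [h1]
end
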